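/- arXiv:1811.03890 — 8 statements merged into one kernel-verified Lean document; each statement's English description precedes it below -/
import Mathlib

section
/- Let G be a finite abelian group of exponent n, let A ⊆ [1, n-1] be a nonempty set of weights, and let b be a positive integer such that gcd(b,n) < n. Then the bA-weighted Davenport constant of G equals the A-weighted Davenport constant of the subgroup gcd(b,n)·G, i.e., D_{bA}(G) = D_A(gcd(b,n)G). -/
/-!
Multiplying the weights by `b` amounts to multiplying the sequence by `b`: a `bA`-weighted zero
sum of `g` is an `A`-weighted zero sum of `b • g`. Hence `D_{bA}(G) = D_A(bG)`, and `bG = dG` for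
`d = gcd(b, n)` by Bézout, since `n` kills `G`.
-/

open Finset

/-- `I` is an index set carrying an `A`-weighted zero sum of `g` (the empty set counts). -/
def IsWZSum {G ι : Type*} [Fintype ι] [AddCommGroup G] (A : Set ℤ) (g : ι → G)
    (I : Finset ι) : Prop :=
  ∃ a : ι → ℤ, (∀ i ∈ I, a i ∈ A) ∧ ∑ i ∈ I, a i • g i = 0

/-- `N_{A,0}(S)`: the number of subsets of the index set carrying an `A`-weighted zero sum. -/
noncomputable def NZero {G ι : Type*} [Fintype ι] [AddCommGroup G] (A : Set ℤ) (g : ι → G) : ℕ :=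
  Set.ncard {I : Finset ι | IsWZSum A g I}

/-- The subsequence of `g` indexed by `J` is `A`-weighted zero-sum free. -/
def IsZSFree {G ι : Type*} [Fintype ι] [AddCommGroup G] (A : Set ℤ) (g : ι → G)
    (J : Finset ι) : Prop :=
  ∀ I ⊆ J, I.Nonempty → ¬ IsWZSum A g I

/-- The `A`-weighted Davenport constant of `G`. -/
noncomputable def DavenportW (A : Set ℤ) (G : Type*) [AddCommGroup G] : ℕ :=
  sInf {l : ℕ | 0 < l ∧ ∀ g : Fin l → G, ∃ I : Finset (Fin l), I.Nonempty ∧ IsWZSum A g I}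

section

variable {G ι : Type*} [AddCommGroup G] [Fintype ι]

theorem isWZSum_mul_image_iff (A : Set ℤ) (b : ℤ) (g : ι → G) (I : Finset ι) :
    IsWZSum ((fun a => b * a) '' A) g I ↔ IsWZSum A (fun i => b • g i) I := by
  constructor
  · rintro ⟨a, haA, hsum⟩
    classical
    choose! c hcA hbc using haA
    refine ⟨c, hcA, ?_⟩
    rw [← hsum]
    refine sum_congr rfl fun i hi => ?_
    rw [smul_smul, mul_comm, ← hbc i hi]
  · rintro ⟨a, haA, hsum⟩
    refine ⟨fun i => b * a i, fun i hi => ⟨a i, haA i hi, rfl⟩, ?_⟩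
    rw [← hsum]
    exact sum_congr rfl fun i _ => (mul_smul b (a i) (g i)).trans (smul_comm b (a i) (g i))

theorem isWZSum_subtype_iff {H : AddSubgroup G} (A : Set ℤ) (g : ι → H) (I : Finset ι) :
    IsWZSum A g I ↔ IsWZSum A (fun i => (g i : G)) I := by
  refine exists_congr fun a => and_congr_right fun _ => ?_
  rw [← ZeroMemClass.coe_eq_zero, AddSubgroup.val_finsetSum]
  simp only [AddSubgroup.coe_zsmul]

theorem davenportW_mul_image_eq_range (A : Set ℤ) (b : ℤ) :
    DavenportW ((fun a => b * a) '' A) G = DavenportW A (zsmulAddGroupHom (α := G) b).range := by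
  unfold DavenportW
  congr 1
  ext l
  simp only [Set.mem_ofPred_eq, isWZSum_mul_image_iff, isWZSum_subtype_iff]
  refine and_congr_right fun _ => ⟨fun hG h => ?_, fun hH g => ?_⟩
  · choose y hy using fun i => (h i).2
    simpa only [← hy, zsmulAddGroupHom_apply] using hG y
  · exact hH fun i => ⟨b • g i, g i, rfl⟩

theorem range_zsmul_eq_range_zsmul_gcd_exponent (b : ℤ) :
    (zsmulAddGroupHom (α := G) b).range =
      (zsmulAddGroupHom (α := G) (b.gcd (AddMonoid.exponent G))).range := by
  ext x
  simp only [AddMonoidHom.mem_range, zsmulAddGroupHom_apply]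
  constructor
  · rintro ⟨y, rfl⟩
    obtain ⟨k, hk⟩ := Int.gcd_dvd_left b (AddMonoid.exponent G)
    exact ⟨k • y, by rw [smul_smul, ← hk]⟩
  · rintro ⟨y, rfl⟩
    have hexp : (AddMonoid.exponent G : ℤ) • y = 0 := by
      rw [natCast_zsmul, AddMonoid.exponent_nsmul_eq_zero]
    refine ⟨Int.gcdA b (AddMonoid.exponent G) • y, ?_⟩
    rw [Int.gcd_eq_gcd_ab, add_smul, mul_smul, mul_smul _ (Int.gcdB _ _), smul_comm _ (Int.gcdB _ _),
      hexp, smul_zero, add_zero]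

end

theorem stmt0_general (G : Type*) [AddCommGroup G] (n : ℕ)
    (hn : AddMonoid.exponent G = n) (A : Set ℤ) (b : ℕ) :
    DavenportW ((fun a => (b : ℤ) * a) '' A) G =
      DavenportW A
        (AddMonoidHom.range
          (AddMonoidHom.mk' (fun x : G => (Nat.gcd b n : ℤ) • x)
            (fun x y => smul_add _ x y))) := by
  subst hn
  have hrange := range_zsmul_eq_range_zsmul_gcd_exponent (G := G) b
  rw [Int.gcd_natCast_natCast] at hrange
  rw [davenportW_mul_image_eq_range, hrange]
  rfl

theorem stmt0 (G : Type*) [AddCommGroup G] [Finite G] (n : ℕ)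
    (hn : AddMonoid.exponent G = n) (A : Set ℤ) (hA : A.Nonempty)
    (hAsub : A ⊆ Set.Icc 1 ((n : ℤ) - 1)) (b : ℕ) (hb : 0 < b)
    (hbn : Nat.gcd b n < n) :
    DavenportW ((fun a => (b : ℤ) * a) '' A) G =
      DavenportW A
        (AddMonoidHom.range
          (AddMonoidHom.mk' (fun x : G => (Nat.gcd b n : ℤ) • x)
            (fun x y => smul_add _ x y))) :=
  stmt0_general G n hn A b
end

section
/- Let G be a finite abelian group of exponent n and let A ⊆ [1, n-1] be a nonempty subset such that A ∪ {0} is, as a subset of Z/nZ, a proper subgroup of Z/nZ. Write A ∪ {0} = ⟨d⟩ with d the minimal positive such generator, so A = dA' where A' ∪ {0} is isomorphic to Z/(n/d)Z. Then D_A(G) = D_{A'}(dG). -/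
open Finset

/-! A weight `d * a'` applied to `g` is the weight `a'` applied to `d • g`, and every sequence
in `dG` lifts to a sequence `g` in `G` through `x ↦ d • x`; so a length admits weighted zero sums
for all sequences over `G` exactly when it does for all sequences over `dG`. -/

section

open Function

variable {G K ι : Type*} [AddCommGroup G] [AddCommGroup K] [Fintype ι]

theorem isWZSum_comp_iff {f : G →+ K} (hf : Injective f) {A : Set ℤ} {g : ι → G}
    {I : Finset ι} : IsWZSum A (f ∘ g) I ↔ IsWZSum A g I := by
  simp only [IsWZSum, comp_apply, ← map_zsmul, ← map_sum, map_eq_zero_iff f hf]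

theorem isWZSum_image_mul_iff (d : ℤ) {A' : Set ℤ} {g : ι → G} {I : Finset ι} :
    IsWZSum ((fun a => d * a) '' A') g I ↔ IsWZSum A' (fun i => d • g i) I := by
  constructor
  · rintro ⟨a, ha, hsum⟩
    choose! b hb hba using ha
    refine ⟨b, hb, ?_⟩
    rw [← hsum]
    refine sum_congr rfl fun i hi => ?_
    rw [← hba i hi, mul_smul, smul_comm]
  · rintro ⟨b, hb, hsum⟩
    refine ⟨fun i => d * b i, fun i hi => ⟨b i, hb i hi, rfl⟩, ?_⟩
    simpa only [mul_smul, smul_comm d] using hsum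

theorem davenportW_image_mul (d : ℤ) (A' : Set ℤ) :
    DavenportW ((fun a => d * a) '' A') G =
      DavenportW A'
        (AddMonoidHom.range (AddMonoidHom.mk' (fun x : G => d • x) (fun x y => smul_add _ x y))) := by
  set H := AddMonoidHom.range (AddMonoidHom.mk' (fun x : G => d • x) (fun x y => smul_add _ x y))
  have hH : Injective H.subtype := Subtype.val_injective
  unfold DavenportW
  congr 1
  ext l
  refine and_congr_right fun _ => ⟨fun hG h => ?_, fun hrange g => ?_⟩
  · choose g hg using fun i => (h i).2
    obtain ⟨I, hI, hsum⟩ := hG g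
    refine ⟨I, hI, (isWZSum_comp_iff hH).1 ?_⟩
    convert (isWZSum_image_mul_iff d).1 hsum using 2 with i
    exact (hg i).symm
  · obtain ⟨I, hI, hsum⟩ := hrange fun i => ⟨d • g i, g i, rfl⟩
    exact ⟨I, hI, (isWZSum_image_mul_iff d).2 ((isWZSum_comp_iff hH).2 hsum)⟩

end

theorem stmt1_general (G : Type*) [AddCommGroup G]
    (A A' : Set ℤ)
    (d : ℕ)
    (hA' : A = (fun a => (d : ℤ) * a) '' A') :
    DavenportW A G =
      DavenportW A'
        (AddMonoidHom.range
          (AddMonoidHom.mk' (fun x : G => (d : ℤ) • x)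
            (fun x y => smul_add _ x y))) := by
  subst hA'
  exact davenportW_image_mul (d : ℤ) A'

theorem stmt1 (G : Type*) [AddCommGroup G] [Finite G] (n : ℕ)
    (hn : AddMonoid.exponent G = n)
    (A A' : Set ℤ) (hA : A.Nonempty) (hAsub : A ⊆ Set.Icc 1 ((n : ℤ) - 1))
    (d : ℕ) (hd : 0 < d)
    (hsub : (fun a : ℤ => (a : ZMod n)) '' A ∪ {0}
              = (AddSubgroup.zmultiples ((d : ZMod n)) : Set (ZMod n)))
    (hproper : AddSubgroup.zmultiples ((d : ZMod n)) ≠ ⊤)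
    (hmin : ∀ d' : ℕ, 0 < d' →
        (fun a : ℤ => (a : ZMod n)) '' A ∪ {0}
          = (AddSubgroup.zmultiples ((d' : ZMod n)) : Set (ZMod n)) → d ≤ d')
    (hA' : A = (fun a => (d : ℤ) * a) '' A') :
    DavenportW A G =
      DavenportW A'
        (AddMonoidHom.range
          (AddMonoidHom.mk' (fun x : G => (d : ℤ) • x)
            (fun x y => smul_add _ x y))) :=
  stmt1_general G A A' d hA'
end

section
/- Let G = H ⊕ C_n^r where H = C_{n_1} ⊕ ⋯ ⊕ C_{n_t} with 1 < n_1 | n_2 | ⋯ | n_t | n, n_t < n, and n = exp(G). Let A = {1, 2, ..., n-1} be the full set of weights. Then D_A(G) = r + 1. -/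
open Finset

lemma aux_mul_eq_zero {n p s : ℕ} [NeZero n] (hps : s * p = n) (x : ZMod n)
    (hx : p ∣ x.val) : (s : ZMod n) * x = 0 := by
  obtain ⟨q, hq⟩ := hx
  have hx' : ((x.val : ℕ) : ZMod n) = x := by rw [ZMod.natCast_val, ZMod.cast_id]
  have h2 : s * x.val = n * q := by rw [hq, ← hps]; ring
  calc (s : ZMod n) * x = (s : ZMod n) * ((x.val : ℕ) : ZMod n) := by rw [hx']
    _ = ((s * x.val : ℕ) : ZMod n) := by push_cast; ring
    _ = ((n * q : ℕ) : ZMod n) := by rw [h2]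
    _ = 0 := by simp

theorem stmt2 (H : Type*) [AddCommGroup H] [Finite H] (n r : ℕ) (hn : 1 < n)
    (hH1 : 1 < AddMonoid.exponent H) (hHdvd : AddMonoid.exponent H ∣ n)
    (hHlt : AddMonoid.exponent H < n)
    (hexp : AddMonoid.exponent (H × (Fin r → ZMod n)) = n) :
    DavenportW (Set.Icc 1 ((n : ℤ) - 1)) (H × (Fin r → ZMod n)) = r + 1 := by
  set m := AddMonoid.exponent H with hm
  obtain ⟨d, hd⟩ := hHdvd
  have hm0 : 0 < m := lt_trans one_pos hH1
  have hd1 : 1 < d := by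
    by_contra h
    push_neg at h
    interval_cases d <;> omega
  obtain ⟨p, hp, hpd⟩ := Nat.exists_prime_and_dvd (by omega : d ≠ 1)
  obtain ⟨e, he⟩ := hpd
  set s := m * e with hs
  have hsp : s * p = n := by rw [hd, he, hs]; ring
  have he0 : 0 < e := by
    rcases Nat.eq_zero_or_pos e with h | h
    · exfalso; rw [h] at he; omega
    · exact h
  have hs0 : 0 < s := Nat.mul_pos hm0 he0
  have hsn : s < n := by nlinarith [hp.two_le]
  haveI : Fact p.Prime := ⟨hp⟩
  haveI : NeZero n := ⟨by omega⟩
  have hpn : p ∣ n := ⟨s, by rw [← hsp]; ring⟩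
  unfold DavenportW
  have hmem : (r + 1) ∈ {l : ℕ | 0 < l ∧ ∀ g : Fin l → (H × (Fin r → ZMod n)),
      ∃ I : Finset (Fin l), I.Nonempty ∧ IsWZSum (Set.Icc 1 ((n : ℤ) - 1)) g I} := by
    refine ⟨Nat.succ_pos r, fun g => ?_⟩
    set φ : Fin (r + 1) → (Fin r → ZMod p) :=
      fun i j => ZMod.castHom hpn (ZMod p) ((g i).2 j) with hφ
    have hnli : ¬ LinearIndependent (ZMod p) φ := by
      intro hli
      have := hli.fintype_card_le_finrank
      rw [Module.finrank_fintype_fun_eq_card] at this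
      simp [Fintype.card_fin] at this
    obtain ⟨c, hc, i0, hi0⟩ := Fintype.not_linearIndependent_iff.mp hnli
    set I : Finset (Fin (r + 1)) := Finset.univ.filter (fun i => c i ≠ 0) with hI
    refine ⟨I, ⟨i0, by simp [hI, hi0]⟩, fun i => ((c i).val * s : ℤ), ?_, ?_⟩
    · intro i hi
      have hci : c i ≠ 0 := by simpa [hI] using hi
      have h1 : 1 ≤ (c i).val := ZMod.val_pos.mpr hci
      have h2 : (c i).val < p := ZMod.val_lt (c i)
      have hnat : (c i).val * s + 1 ≤ n := by nlinarith
      have hnat1 : 1 ≤ (c i).val * s := Nat.mul_pos h1 hs0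
      simp only [Set.mem_Icc]
      constructor
      · exact_mod_cast hnat1
      · have : ((c i).val * s : ℤ) + 1 ≤ (n : ℤ) := by exact_mod_cast hnat
        push_cast at this ⊢
        linarith
    · have hIsum : ∑ i ∈ I, (((c i).val : ℤ) * (s : ℤ)) • g i
          = ∑ i : Fin (r + 1), (((c i).val : ℤ) * (s : ℤ)) • g i := by
        refine Finset.sum_subset (Finset.subset_univ I) (fun i _ hiI => ?_)
        have : c i = 0 := by simpa [hI] using hiI
        simp [this]
      show ∑ i ∈ I, (((c i).val : ℤ) * (s : ℤ)) • g i = 0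
      rw [hIsum]
      refine Prod.ext ?_ ?_
      · rw [Prod.fst_sum]
        refine Finset.sum_eq_zero fun i _ => ?_
        have hsz : (s : ℤ) • (g i).1 = 0 := by
          rw [natCast_zsmul, hs, mul_comm, mul_smul, AddMonoid.exponent_nsmul_eq_zero,
            smul_zero]
        show (((c i).val : ℤ) * (s : ℤ)) • ((g i).1, (g i).2).1 = 0
        simp only [mul_smul]
        rw [hsz, smul_zero]
      · rw [Prod.snd_sum]
        funext j
        rw [Finset.sum_apply]
        simp only [Prod.smul_snd, Pi.smul_apply, zsmul_eq_mul]
        push_cast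
        have hgoal_eq : ∑ i : Fin (r + 1), ((c i).val : ZMod n) * (s : ZMod n) * (g i).2 j
            = (s : ZMod n) * ∑ i : Fin (r + 1), ((c i).val : ZMod n) * (g i).2 j := by
          rw [Finset.mul_sum]
          exact Finset.sum_congr rfl fun i _ => by ring
        set w := ∑ i : Fin (r + 1), ((c i).val : ZMod n) * (g i).2 j with hw
        have hcast : ZMod.castHom hpn (ZMod p) w = 0 := by
          rw [hw, map_sum]
          simp only [map_mul, map_natCast]
          have hcj := congrFun hc j
          simp only [Finset.sum_apply, Pi.smul_apply, smul_eq_mul, Pi.zero_apply] at hcj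
          calc ∑ i : Fin (r + 1), ((c i).val : ZMod p) * ZMod.castHom hpn (ZMod p) ((g i).2 j)
              = ∑ i : Fin (r + 1), c i * φ i j := by
                refine Finset.sum_congr rfl fun i _ => ?_
                rw [ZMod.natCast_val, ZMod.cast_id, hφ]
            _ = 0 := hcj
        have hdvd : p ∣ w.val := by
          have hcw : ((w.val : ℕ) : ZMod p) = 0 := by
            rw [ZMod.natCast_val, ← ZMod.castHom_apply (h := hpn), hcast]
          exact (ZMod.natCast_eq_zero_iff _ _).mp hcw
        calc ∑ i : Fin (r + 1), ((c i).val : ZMod n) * (s : ZMod n) * (g i).2 j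
            = (s : ZMod n) * w := hgoal_eq
          _ = 0 := aux_mul_eq_zero hsp w hdvd
  apply le_antisymm
  · exact Nat.sInf_le hmem
  · refine le_csInf ⟨_, hmem⟩ fun l hl => ?_
    obtain ⟨hl0, hall⟩ := hl
    by_contra hlt
    push_neg at hlt
    have hlr : l ≤ r := by omega
    set g : Fin l → H × (Fin r → ZMod n) :=
      fun i => (0, Pi.single (Fin.castLE hlr i) (1 : ZMod n)) with hg
    obtain ⟨I, ⟨j, hj⟩, a, ha, hsum⟩ := hall g
    have h2 := congrFun (congrArg Prod.snd hsum) (Fin.castLE hlr j)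
    rw [Prod.snd_sum, Finset.sum_apply] at h2
    have hterm : ∑ i ∈ I, (a i • g i).2 (Fin.castLE hlr j)
        = a j • (1 : ZMod n) := by
      rw [Finset.sum_eq_single_of_mem j hj]
      · simp [hg]
      · intro i _ hij
        rw [Prod.smul_snd, Pi.smul_apply]
        have hne : Fin.castLE hlr j ≠ Fin.castLE hlr i := by
          intro hcontra
          exact hij ((Fin.castLE_injective hlr) hcontra.symm)
        simp [hg, Pi.single_apply, hne]
    rw [hterm] at h2
    have haz : ((a j : ℤ) : ZMod n) = 0 := by
      rw [zsmul_eq_mul, mul_one] at h2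
      exact h2
    have hdvd : (n : ℤ) ∣ a j := (ZMod.intCast_zmod_eq_zero_iff_dvd _ _).mp haz
    have haj := ha j hj
    simp only [Set.mem_Icc] at haj
    have : (n : ℤ) ≤ a j := Int.le_of_dvd (by linarith [haj.1]) hdvd
    have : (n : ℤ) - 1 < (n : ℤ) := by linarith
    linarith [haj.2]
end

section
/- Let G = H ⊕ C_n^r be a finite abelian group with exp(G) = n and exp(H) < n, and A = {1,...,n-1}. Let S = TW be a sequence over G where T is an A-weighted zero-sum free subsequence of S that is maximal with respect to length among A-weighted zero-sum free subsequences of S. Then N_{A,0}(S) ≥ 2^{|W|} = 2^{|S| - |T|}. -/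
open Finset

theorem stmt6 (H : Type*) [AddCommGroup H] [Finite H] (n r : ℕ)
    (hexpH : AddMonoid.exponent H < n)
    (hexp : AddMonoid.exponent (H × (Fin r → ZMod n)) = n)
    (m : ℕ) (g : Fin m → H × (Fin r → ZMod n)) (It : Finset (Fin m))
    (hzsf : IsZSFree (Set.Icc 1 ((n : ℤ) - 1)) g It)
    (hmax : ∀ J : Finset (Fin m),
      IsZSFree (Set.Icc 1 ((n : ℤ) - 1)) g J → J.card ≤ It.card) :
    2 ^ (m - It.card) ≤ NZero (Set.Icc 1 ((n : ℤ) - 1)) g := by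
  classical
  set A : Set ℤ := Set.Icc 1 ((n : ℤ) - 1) with hA
  have hnpos : (0 : ℤ) < (n : ℤ) := by
    have h1 : 0 < AddMonoid.exponent H := AddMonoid.ExponentExists.of_finite.exponent_pos
    exact_mod_cast (by omega : 0 < n)
  have hkill : ∀ (w : ℤ) (x : H × (Fin r → ZMod n)), (n : ℤ) ∣ w → w • x = 0 := by
    rintro w x ⟨k, rfl⟩
    have hnx : (n : ℤ) • x = 0 := by
      have h := AddMonoid.exponent_nsmul_eq_zero (G := H × (Fin r → ZMod n)) x
      rw [hexp] at h
      rw [natCast_zsmul]; exact h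
    rw [mul_comm, mul_smul, hnx, smul_zero]
  have hmod : ∀ (w : ℤ) (x : H × (Fin r → ZMod n)), (w % (n : ℤ)) • x = w • x := by
    intro w x
    have hd : (n : ℤ) ∣ (w - w % n) := by
      refine ⟨w / n, by rw [Int.emod_def]; ring⟩
    have h0 : (w - w % n) • x = 0 := hkill _ _ hd
    rw [sub_smul, sub_eq_zero] at h0
    exact h0.symm
  -- key consequence of maximality
  have key : ∀ i : Fin m, ∃ (b : ℤ) (c : Fin m → ℤ) (J : Finset (Fin m)),
      i ∉ It → b ∈ A ∧ J ⊆ It ∧ (∀ j ∈ J, c j ∈ A) ∧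
        b • g i + ∑ j ∈ J, c j • g j = 0 := by
    intro i
    by_cases hi : i ∈ It
    · exact ⟨0, 0, ∅, fun h => absurd hi h⟩
    have hnz : ¬ IsZSFree A g (insert i It) := by
      intro h
      have := hmax _ h
      rw [Finset.card_insert_of_notMem hi] at this
      omega
    unfold IsZSFree at hnz
    push_neg at hnz
    obtain ⟨I, hIsub, hIne, a, ha, hsum⟩ := hnz
    have hiI : i ∈ I := by
      by_contra hiI
      refine hzsf I ?_ hIne ⟨a, ha, hsum⟩
      intro x hx
      rcases Finset.mem_insert.1 (hIsub hx) with h | h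
      · exact absurd (h ▸ hx) hiI
      · exact h
    refine ⟨a i, a, I.erase i, fun _ => ⟨ha i hiI, ?_, fun j hj => ha j (Finset.mem_of_mem_erase hj), ?_⟩⟩
    · intro j hj
      rcases Finset.mem_erase.1 hj with ⟨hne, hjI⟩
      exact (Finset.mem_insert.1 (hIsub hjI)).resolve_left hne
    · exact (Finset.add_sum_erase I (fun j => a j • g j) hiI).trans hsum
  choose b c J hkey using key
  set w : Finset (Fin m) → Fin m → ℤ :=
    fun K j => ∑ i ∈ K, (if j ∈ J i then c i j else 0) with hw
  set f : Finset (Fin m) → Finset (Fin m) :=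
    fun K => K ∪ It.filter (fun j => ¬ ((n : ℤ) ∣ w K j)) with hf
  have hwz : ∀ K : Finset (Fin m), K ⊆ Itᶜ → IsWZSum A g (f K) := by
    intro K hK
    have hKIt : ∀ i ∈ K, i ∉ It := fun i hi => Finset.mem_compl.1 (hK hi)
    refine ⟨fun x => if x ∈ K then b x else w K x % n, ?_, ?_⟩
    · intro x hx
      by_cases hxK : x ∈ K
      · simpa [hxK] using (hkey x (hKIt x hxK)).1
      · simp only [hxK, if_false]
        rcases Finset.mem_union.1 hx with h | h
        · exact absurd h hxK
        rcases Finset.mem_filter.1 h with ⟨hxIt, hndvd⟩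
        have h0 : 0 ≤ w K x % n := Int.emod_nonneg _ (by omega)
        have hlt : w K x % n < n := Int.emod_lt_of_pos _ hnpos
        have hne : w K x % n ≠ 0 := fun h => hndvd (Int.dvd_of_emod_eq_zero h)
        exact ⟨by omega, by omega⟩
    · have hdisj : Disjoint K (It.filter fun j => ¬ ((n : ℤ) ∣ w K j)) := by
        rw [Finset.disjoint_left]
        intro x hxK hxf
        exact hKIt x hxK (Finset.mem_filter.1 hxf).1
      show ∑ x ∈ K ∪ It.filter (fun j => ¬ ((n : ℤ) ∣ w K j)),
        (if x ∈ K then b x else w K x % n) • g x = 0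
      rw [Finset.sum_union hdisj]
      have h1 : ∑ x ∈ K, (if x ∈ K then b x else w K x % n) • g x
          = ∑ x ∈ K, b x • g x :=
        Finset.sum_congr rfl (fun x hx => by rw [if_pos hx])
      have h2 : ∑ x ∈ It.filter (fun j => ¬ ((n : ℤ) ∣ w K j)),
          (if x ∈ K then b x else w K x % n) • g x = ∑ x ∈ It, w K x • g x := by
        have hc : ∀ x ∈ It.filter (fun j => ¬ ((n : ℤ) ∣ w K j)),
            (if x ∈ K then b x else w K x % n) • g x = w K x • g x := by
          intro x hx
          rcases Finset.mem_filter.1 hx with ⟨hxIt, _⟩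
          have hxK : x ∉ K := fun h => hKIt x h hxIt
          rw [if_neg hxK, hmod]
        rw [Finset.sum_congr rfl hc]
        refine Finset.sum_subset (Finset.filter_subset _ _) ?_
        intro x hxIt hxf
        have hdvd : (n : ℤ) ∣ w K x := by
          by_contra hcon
          exact hxf (Finset.mem_filter.2 ⟨hxIt, hcon⟩)
        exact hkill _ _ hdvd
      rw [h1, h2]
      have h3 : ∑ x ∈ It, w K x • g x = ∑ i ∈ K, ∑ j ∈ J i, c i j • g j := by
        have e1 : ∀ x ∈ It, w K x • g x
            = ∑ i ∈ K, (if x ∈ J i then c i x • g x else 0) := by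
          intro x _
          rw [hw]
          rw [Finset.sum_smul]
          exact Finset.sum_congr rfl (fun i _ => by
            split <;> simp)
        rw [Finset.sum_congr rfl e1, Finset.sum_comm]
        refine Finset.sum_congr rfl (fun i hi => ?_)
        rw [Finset.sum_ite_mem, Finset.inter_eq_right.2 ((hkey i (hKIt i hi)).2.1)]
      rw [h3, ← Finset.sum_add_distrib]
      refine Finset.sum_eq_zero (fun i hi => ?_)
      exact (hkey i (hKIt i hi)).2.2.2
  have hfin : ∀ K ⊆ Itᶜ, f K ∩ Itᶜ = K := by
    intro K hKc
    ext x
    simp only [hf, Finset.mem_inter, Finset.mem_union, Finset.mem_filter, Finset.mem_compl]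
    constructor
    · rintro ⟨h | ⟨hIt, _⟩, hcmp⟩
      · exact h
      · exact absurd hIt hcmp
    · intro hx
      exact ⟨Or.inl hx, Finset.mem_compl.1 (hKc hx)⟩
  have hinj : Set.InjOn f ↑(Itᶜ.powerset) := by
    intro K1 h1 K2 h2 hEq
    rw [Finset.mem_coe, Finset.mem_powerset] at h1 h2
    rw [← hfin K1 h1, ← hfin K2 h2, hEq]
  have hcard : (Itᶜ.powerset.image f).card = 2 ^ (m - It.card) := by
    rw [Finset.card_image_of_injOn hinj, Finset.card_powerset, Finset.card_compl,
      Fintype.card_fin]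
  have hsubset : ↑(Itᶜ.powerset.image f) ⊆ {I : Finset (Fin m) | IsWZSum A g I} := by
    intro I hI
    rw [Finset.mem_coe, Finset.mem_image] at hI
    obtain ⟨K, hK, rfl⟩ := hI
    exact hwz K (Finset.mem_powerset.1 hK)
  calc 2 ^ (m - It.card) = (Itᶜ.powerset.image f).card := hcard.symm
    _ = (↑(Itᶜ.powerset.image f) : Set (Finset (Fin m))).ncard :=
        (Set.ncard_coe_finset _).symm
    _ ≤ NZero A g := Set.ncard_le_ncard hsubset (Set.toFinite _)
end

section
/- Let G = H ⊕ C_n^r with exp(G) = n, exp(H) < n, and A = {1,...,n-1}, so that D_A(G) = r+1. Suppose S is a sequence over G with 0 not appearing in S, every element of S of order exactly n, and N_{A,0}(S) = 2^{|S| - r}. Then |S| ≥ r, and S contains a maximal A-weighted zero-sum free subsequence T = g_1 ⋯ g_r of length exactly r such that S = g_1 ⋯ g_r · h_1 ⋯ h_k where for each j there are b_j ∈ A, a unique subset I_j ⊆ [1,r], and weights a_i ∈ A with b_j h_j = ∑_{i∈I_j} a_i g_i. -/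
open Finset

section AuxLemmas

variable {G : Type*} [AddCommGroup G] {n : ℕ}

lemma aux_zsmul_zero_of_dvd {x : G} (hx : n • x = 0) {a : ℤ} (ha : (n : ℤ) ∣ a) :
    a • x = 0 := by
  obtain ⟨k, rfl⟩ := ha
  rw [mul_comm, mul_smul, natCast_zsmul, hx, smul_zero]

lemma aux_zsmul_emod {x : G} (hx : n • x = 0) (a : ℤ) : (a % (n : ℤ)) • x = a • x := by
  conv_rhs => rw [← Int.emod_add_mul_ediv a (n : ℤ)]
  rw [add_smul, aux_zsmul_zero_of_dvd hx ⟨a / n, rfl⟩, add_zero]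

lemma aux_mem_A_not_dvd (hn : 0 < n) {a : ℤ} (ha : a ∈ Set.Icc (1 : ℤ) ((n : ℤ) - 1)) :
    ¬ (n : ℤ) ∣ a := by
  obtain ⟨h1, h2⟩ := ha
  intro hd
  have := Int.le_of_dvd (by omega) hd
  omega

lemma aux_emod_mem_A (hn : 0 < n) {a : ℤ} (ha : ¬ (n : ℤ) ∣ a) :
    a % (n : ℤ) ∈ Set.Icc (1 : ℤ) ((n : ℤ) - 1) := by
  have hn' : (n : ℤ) ≠ 0 := by exact_mod_cast hn.ne'
  have h0 : 0 ≤ a % n := Int.emod_nonneg a hn'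
  have h1 : a % n < n := Int.emod_lt_of_pos a (by exact_mod_cast hn)
  have h2 : a % n ≠ 0 := fun h => ha (Int.dvd_of_emod_eq_zero h)
  constructor <;> omega

variable {ι : Type*} [Fintype ι]

lemma aux_wzsum_iff (hn : 0 < n) (g : ι → G) (hsm : ∀ i, n • g i = 0) (I : Finset ι) :
    IsWZSum (Set.Icc 1 ((n : ℤ) - 1)) g I ↔
      ∃ a : ι → ℤ, (∀ i ∈ I, ¬ (n : ℤ) ∣ a i) ∧ ∑ i ∈ I, a i • g i = 0 := by
  constructor
  · rintro ⟨a, ha, hs⟩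
    exact ⟨a, fun i hi => aux_mem_A_not_dvd hn (ha i hi), hs⟩
  · rintro ⟨a, ha, hs⟩
    refine ⟨fun i => a i % (n : ℤ), fun i hi => aux_emod_mem_A hn (ha i hi), ?_⟩
    rw [← hs]
    exact Finset.sum_congr rfl fun i _ => aux_zsmul_emod (hsm i) (a i)

lemma aux_wzsum_filter [DecidableEq ι] (hn : 0 < n) (g : ι → G) (hsm : ∀ i, n • g i = 0)
    (J : Finset ι) (a : ι → ℤ) (hs : ∑ i ∈ J, a i • g i = 0) :
    IsWZSum (Set.Icc 1 ((n : ℤ) - 1)) g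
      (J.filter (fun i => ¬ (n : ℤ) ∣ a i)) := by
  classical
  rw [aux_wzsum_iff hn g hsm]
  refine ⟨a, fun i hi => (Finset.mem_filter.1 hi).2, ?_⟩
  rw [← hs]
  exact Finset.sum_filter_of_ne fun i _ h => fun hd => h (aux_zsmul_zero_of_dvd (hsm i) hd)

end AuxLemmas

lemma aux_zsfree_card_le {Hh : Type*} [AddCommGroup Hh] {n r m : ℕ} (p d : ℕ)
    (hp : p.Prime) (hnpd : n = p * d) (hd : 0 < d)
    (hHh : ∀ h : Hh, d • h = 0)
    (g : Fin m → Hh × (Fin r → ZMod n))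
    (hsm : ∀ i, n • g i = 0)
    (J : Finset (Fin m)) (hJ : IsZSFree (Set.Icc 1 ((n : ℤ) - 1)) g J) :
    J.card ≤ r := by
  classical
  by_contra hlt
  push_neg at hlt
  have hn0 : 0 < n := by
    have := hp.pos
    nlinarith
  haveI : NeZero n := ⟨hn0.ne'⟩
  let S : ({i // i ∈ J} → Fin p) → Fin r → ZMod n := fun c k =>
    ∑ i ∈ J.attach, ((c i : ℕ) : ZMod n) * (g i).2 k
  let F : ({i // i ∈ J} → Fin p) → Fin r → Fin p := fun c k =>
    ⟨(S c k).val % p, Nat.mod_lt _ hp.pos⟩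
  have hcard : Fintype.card (Fin r → Fin p) < Fintype.card ({i // i ∈ J} → Fin p) := by
    simp only [Fintype.card_fun, Fintype.card_fin, Fintype.card_coe]
    exact Nat.pow_lt_pow_right hp.one_lt hlt
  obtain ⟨c, c', hne, hFeq⟩ := Fintype.exists_ne_map_eq_of_card_lt F hcard
  have hdp0 : ((d : ZMod n) * p) = 0 := by
    rw [← Nat.cast_mul, mul_comm d p, ← hnpd, ZMod.natCast_self]
  have key : ∀ z : ZMod n, (d : ZMod n) * z = (d : ZMod n) * ((z.val % p : ℕ) : ZMod n) := by
    intro z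
    conv_lhs => rw [← ZMod.natCast_rightInverse z, ← Nat.div_add_mod z.val p]
    push_cast
    ring_nf
    linear_combination ((z.val / p : ℕ) : ZMod n) * hdp0
  let a : Fin m → ℤ := fun i =>
    if h : i ∈ J then (((c ⟨i, h⟩ : ℕ) : ℤ) - ((c' ⟨i, h⟩ : ℕ) : ℤ)) * d else 0
  have ha : ∀ (i : {i // i ∈ J}), a i = (((c i : ℕ) : ℤ) - ((c' i : ℕ) : ℤ)) * d := by
    intro i
    simp only [a, dif_pos i.2]
  have hrel : ∑ i ∈ J, a i • g i = 0 := by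
    rw [← Finset.sum_attach J (fun i => a i • g i)]
    refine Prod.ext ?_ ?_
    · rw [Prod.fst_sum]
      simp only [Prod.fst_zero]
      refine Finset.sum_eq_zero fun i _ => ?_
      rw [Prod.smul_fst, ha i, mul_smul, natCast_zsmul, hHh, smul_zero]
    · rw [Prod.snd_sum]
      simp only [Prod.snd_zero]
      funext k
      rw [Finset.sum_apply]
      have hterm : ∀ i ∈ J.attach, ((a i • g i).2 : Fin r → ZMod n) k
          = (d : ZMod n) * (((c i : ℕ) : ZMod n) * (g i).2 k)
            - (d : ZMod n) * (((c' i : ℕ) : ZMod n) * (g i).2 k) := by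
        intro i _
        rw [Prod.smul_snd, Pi.smul_apply, zsmul_eq_mul, ha i]
        push_cast
        ring
      rw [Finset.sum_congr rfl hterm, Finset.sum_sub_distrib, ← Finset.mul_sum, ← Finset.mul_sum]
      have hk : (S c k).val % p = (S c' k).val % p := by
        simpa [F] using congrArg Fin.val (congrFun hFeq k)
      show (d : ZMod n) * S c k - (d : ZMod n) * S c' k = 0
      rw [key (S c k), key (S c' k), hk, sub_self]
  obtain ⟨i0, hi0⟩ := Function.ne_iff.1 hne
  have hd' : (d : ℤ) ≠ 0 := by exact_mod_cast hd.ne'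
  have hndvd : ¬ (n : ℤ) ∣ a (i0 : Fin m) := by
    rw [ha i0]
    intro hdvd
    have h1 : ((c i0 : ℕ) : ℤ) < p := by exact_mod_cast (c i0).2
    have h2 : ((c' i0 : ℕ) : ℤ) < p := by exact_mod_cast (c' i0).2
    have h3 : ((c i0 : ℕ) : ℤ) ≠ ((c' i0 : ℕ) : ℤ) := by
      intro h
      exact hi0 (Fin.ext (by exact_mod_cast h))
    have h4 : (0 : ℤ) ≤ ((c i0 : ℕ) : ℤ) := Int.natCast_nonneg _
    have h5 : (0 : ℤ) ≤ ((c' i0 : ℕ) : ℤ) := Int.natCast_nonneg _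
    have hxd0 : (((c i0 : ℕ) : ℤ) - ((c' i0 : ℕ) : ℤ)) * d ≠ 0 :=
      mul_ne_zero (sub_ne_zero.2 h3) hd'
    have hle : (n : ℤ) ≤ |(((c i0 : ℕ) : ℤ) - ((c' i0 : ℕ) : ℤ)) * d| :=
      Int.le_of_dvd (abs_pos.2 hxd0) ((dvd_abs _ _).2 hdvd)
    rw [abs_mul, abs_of_nonneg (by exact_mod_cast hd.le : (0 : ℤ) ≤ (d : ℤ))] at hle
    have habs : |(((c i0 : ℕ) : ℤ) - ((c' i0 : ℕ) : ℤ))| ≤ (p : ℤ) - 1 := by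
      rw [abs_le]
      omega
    have hpd : ((n : ℤ)) = (p : ℤ) * d := by exact_mod_cast hnpd
    have hdpos : (0 : ℤ) < d := by exact_mod_cast hd
    nlinarith [abs_nonneg (((c i0 : ℕ) : ℤ) - ((c' i0 : ℕ) : ℤ))]
  have hwz := aux_wzsum_filter hn0 g hsm J a hrel
  have hmem : (i0 : Fin m) ∈ J.filter (fun i => ¬ (n : ℤ) ∣ a i) :=
    Finset.mem_filter.2 ⟨i0.2, hndvd⟩
  exact hJ _ (Finset.filter_subset _ _) ⟨_, hmem⟩ hwz

theorem stmt8 (H : Type*) [AddCommGroup H] [Finite H] (n r : ℕ)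
    (hexpH : AddMonoid.exponent H < n)
    (hexp : AddMonoid.exponent (H × (Fin r → ZMod n)) = n)
    (m : ℕ) (g : Fin m → H × (Fin r → ZMod n))
    (h0 : ∀ i, g i ≠ 0) (hord : ∀ i, addOrderOf (g i) = n)
    (hN : (NZero (Set.Icc 1 ((n : ℤ) - 1)) g : ℚ) = 2 ^ ((m : ℤ) - (r : ℤ))) :
    r ≤ m ∧ ∃ It : Finset (Fin m), It.card = r ∧
      IsZSFree (Set.Icc 1 ((n : ℤ) - 1)) g It ∧
      (∀ J : Finset (Fin m),
        IsZSFree (Set.Icc 1 ((n : ℤ) - 1)) g J → J.card ≤ It.card) ∧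
      ∀ j ∉ It, ∃ b ∈ Set.Icc 1 ((n : ℤ) - 1),
        ∃! I : Finset (Fin m), I ⊆ It ∧ ∃ a : Fin m → ℤ,
          (∀ i ∈ I, a i ∈ Set.Icc 1 ((n : ℤ) - 1)) ∧
          b • g j = ∑ i ∈ I, a i • g i := by
  classical
  set A : Set ℤ := Set.Icc 1 ((n : ℤ) - 1) with hA
  set e : ℕ := AddMonoid.exponent H with he
  have he0 : 0 < e := Nat.pos_of_ne_zero AddMonoid.exponent_ne_zero_of_finite
  have hn0 : 0 < n := lt_trans he0 hexpH
  have hsm : ∀ i, n • g i = 0 := fun i => by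
    have h1 := addOrderOf_nsmul_eq_zero (g i)
    rwa [hord i] at h1
  -- exp H divides n
  have hedvd : e ∣ n := by
    rw [he, AddMonoid.exponent_dvd_iff_forall_nsmul_eq_zero]
    intro h
    have h1 := AddMonoid.exponent_nsmul_eq_zero ((h, 0) : H × (Fin r → ZMod n))
    rw [hexp] at h1
    simpa using congrArg Prod.fst h1
  obtain ⟨s, hs⟩ := hedvd
  have hs1 : 1 < s := by
    rcases Nat.lt_or_ge s 2 with h | h
    · interval_cases s <;> omega
    · omega
  obtain ⟨p, hp, hps⟩ := s.exists_prime_and_dvd (by omega)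
  obtain ⟨s', rfl⟩ := hps
  set d : ℕ := e * s' with hdd
  have hnpd : n = p * d := by rw [hs, hdd]; ring
  have hs'0 : 0 < s' := by
    rcases Nat.eq_zero_or_pos s' with h | h
    · subst h; simp [hdd] at hnpd; omega
    · exact h
  have hd0 : 0 < d := Nat.mul_pos he0 hs'0
  have hHd : ∀ h : H, d • h = 0 := by
    intro h
    rw [hdd, mul_comm, mul_smul, he, AddMonoid.exponent_nsmul_eq_zero, smul_zero]
  -- Davenport bound
  have hDav : ∀ J : Finset (Fin m), IsZSFree A g J → J.card ≤ r := fun J hJ =>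
    aux_zsfree_card_le p d hp hnpd hd0 hHd g hsm J hJ
  -- maximal zero-sum free subset
  have hZne : (univ.filter (fun J : Finset (Fin m) => IsZSFree A g J)).Nonempty := by
    refine ⟨∅, Finset.mem_filter.2 ⟨mem_univ _, ?_⟩⟩
    intro I hI hne _
    rw [Finset.subset_empty] at hI
    exact (Finset.not_nonempty_empty (hI ▸ hne))
  obtain ⟨It, hItZ, hItmax⟩ :=
    Finset.exists_max_image (univ.filter (fun J : Finset (Fin m) => IsZSFree A g J))
      Finset.card hZne
  have hItfree : IsZSFree A g It := (Finset.mem_filter.1 hItZ).2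
  have hmax : ∀ J : Finset (Fin m), IsZSFree A g J → J.card ≤ It.card := fun J hJ =>
    hItmax J (Finset.mem_filter.2 ⟨mem_univ _, hJ⟩)
  have htr : It.card ≤ r := hDav It hItfree
  -- representation of elements outside It
  have hrep : ∀ j ∉ It, ∃ b : ℤ, ¬ (n : ℤ) ∣ b ∧
      ∃ a : Fin m → ℤ, b • g j = ∑ i ∈ It, a i • g i := by
    intro j hj
    have hnotfree : ¬ IsZSFree A g (insert j It) := by
      intro hcon
      have := hmax _ hcon
      rw [Finset.card_insert_of_notMem hj] at this
      omega
    rw [IsZSFree] at hnotfree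
    push_neg at hnotfree
    obtain ⟨I, hIsub, hIne, hIw⟩ := hnotfree
    have hIw' := hIw
    rw [aux_wzsum_iff hn0 g hsm] at hIw'
    obtain ⟨a, hand, hasum⟩ := hIw'
    have hjI : j ∈ I := by
      by_contra hjn
      refine hItfree I (fun x hx => ?_) hIne hIw
      rcases Finset.mem_insert.1 (hIsub hx) with h | h
      · exact absurd (h ▸ hx) hjn
      · exact h
    refine ⟨- a j, by simpa using (hand j hjI), fun i => if i ∈ I.erase j then a i else 0, ?_⟩
    have hsplit : a j • g j + ∑ i ∈ I.erase j, a i • g i = 0 := by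
      rw [Finset.add_sum_erase I (fun i => a i • g i) hjI]
      exact hasum
    have herase_sub : I.erase j ⊆ It := by
      intro x hx
      rcases Finset.mem_insert.1 (hIsub (Finset.erase_subset _ _ hx)) with h | h
      · exact absurd h (Finset.ne_of_mem_erase hx)
      · exact h
    rw [Finset.sum_congr rfl fun i _ => by rw [ite_smul, zero_smul]]
    rw [Finset.sum_ite_mem, Finset.inter_eq_right.2 herase_sub, neg_smul,
      neg_eq_iff_add_eq_zero]
    exact hsplit
  -- global choice
  have hrep' : ∀ j : Fin m, ∃ (b : ℤ) (a : Fin m → ℤ),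
      j ∉ It → ¬ (n : ℤ) ∣ b ∧ b • g j = ∑ i ∈ It, a i • g i := by
    intro j
    by_cases hj : j ∈ It
    · exact ⟨1, 0, fun h => absurd hj h⟩
    · obtain ⟨b, hb, a, hba⟩ := hrep j hj
      exact ⟨b, a, fun _ => ⟨hb, hba⟩⟩
  choose bf af hbf using hrep'
  -- the injection J ↦ f J from subsets of Itᶜ into weighted zero-sum sets
  let w : Finset (Fin m) → Fin m → ℤ := fun J i =>
    if i ∈ J then bf i else - ∑ j ∈ J, af j i
  let f : Finset (Fin m) → Finset (Fin m) := fun J =>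
    (J ∪ It).filter (fun i => ¬ (n : ℤ) ∣ w J i)
  have hfprop : ∀ J ∈ (Itᶜ : Finset (Fin m)).powerset,
      IsWZSum A g (f J) ∧ J ⊆ f J ∧ f J \ It = J := by
    intro J hJ
    rw [Finset.mem_powerset] at hJ
    have hdisj : Disjoint J It := by
      refine Finset.disjoint_left.2 fun x hx hx' => ?_
      exact (Finset.mem_compl.1 (hJ hx)) hx'
    have hJnotin : ∀ j ∈ J, j ∉ It := fun j hj => Finset.mem_compl.1 (hJ hj)
    have hwJ : ∀ i ∈ J, w J i = bf i := fun i hi => if_pos hi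
    have hwIt : ∀ i ∈ It, w J i = - ∑ j ∈ J, af j i := fun i hi =>
      if_neg (Finset.disjoint_right.1 hdisj hi)
    have hrel : ∑ i ∈ J ∪ It, w J i • g i = 0 := by
      rw [Finset.sum_union hdisj]
      have h1 : ∑ i ∈ J, w J i • g i = ∑ i ∈ It, (∑ j ∈ J, af j i) • g i := by
        rw [Finset.sum_congr rfl fun i hi => by rw [hwJ i hi]]
        rw [Finset.sum_congr rfl fun j hj => (hbf j (hJnotin j hj)).2]
        rw [Finset.sum_comm]
        exact Finset.sum_congr rfl fun i _ => (Finset.sum_smul).symm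
      have h2 : ∑ i ∈ It, w J i • g i = - ∑ i ∈ It, (∑ j ∈ J, af j i) • g i := by
        rw [← Finset.sum_neg_distrib]
        exact Finset.sum_congr rfl fun i hi => by rw [hwIt i hi, neg_smul]
      rw [h1, h2, add_neg_cancel]
    refine ⟨aux_wzsum_filter hn0 g hsm _ _ hrel, ?_, ?_⟩
    · intro j hj
      refine Finset.mem_filter.2 ⟨Finset.mem_union_left _ hj, ?_⟩
      rw [hwJ j hj]
      exact (hbf j (hJnotin j hj)).1
    · ext x
      simp only [f, Finset.mem_sdiff, Finset.mem_filter, Finset.mem_union]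
      constructor
      · rintro ⟨⟨h | h, _⟩, hni⟩
        · exact h
        · exact absurd h hni
      · intro hx
        refine ⟨⟨Or.inl hx, ?_⟩, hJnotin x hx⟩
        rw [hwJ x hx]
        exact (hbf x (hJnotin x hx)).1
  have hinj : Set.InjOn f ((Itᶜ : Finset (Fin m)).powerset : Set (Finset (Fin m)))  := by
    intro J1 h1 J2 h2 hf
    have e1 := (hfprop J1 h1).2.2
    have e2 := (hfprop J2 h2).2.2
    rw [← e1, ← e2, hf]
  -- counting
  have hNnat : NZero A g * 2 ^ r = 2 ^ m := by
    have hq : ((NZero A g * 2 ^ r : ℕ) : ℚ) = ((2 ^ m : ℕ) : ℚ) := by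
      push_cast
      rw [hN, ← zpow_natCast (2 : ℚ) r, ← zpow_natCast (2 : ℚ) m,
        ← zpow_add₀ (two_ne_zero)]
      congr 1
      omega
    exact_mod_cast hq
  have hlow : 2 ^ (m - It.card) ≤ NZero A g := by
    have himage : ((Itᶜ : Finset (Fin m)).powerset.image f : Set (Finset (Fin m)))
        ⊆ {I : Finset (Fin m) | IsWZSum A g I} := by
      intro I hI
      simp only [Finset.coe_image, Set.mem_image, Finset.mem_coe] at hI
      obtain ⟨J, hJ, rfl⟩ := hI
      exact (hfprop J hJ).1
    have hcard1 : ((Itᶜ : Finset (Fin m)).powerset.image f).card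
        = 2 ^ (m - It.card) := by
      rw [Finset.card_image_of_injOn (by exact_mod_cast hinj), Finset.card_powerset,
        Finset.card_compl, Fintype.card_fin]
    calc 2 ^ (m - It.card) = ((Itᶜ : Finset (Fin m)).powerset.image f).card := hcard1.symm
      _ = (((Itᶜ : Finset (Fin m)).powerset.image f : Set (Finset (Fin m)))).ncard :=
          (Set.ncard_coe_finset _).symm
      _ ≤ NZero A g := Set.ncard_le_ncard himage (Set.toFinite _)
  have htm : It.card ≤ m := by
    have := Finset.card_le_univ It
    simpa using this
  have hrt : r ≤ It.card := by
    have h1 : 2 ^ (m - It.card) * 2 ^ r ≤ 2 ^ m := by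
      calc 2 ^ (m - It.card) * 2 ^ r ≤ NZero A g * 2 ^ r :=
            Nat.mul_le_mul_right _ hlow
        _ = 2 ^ m := hNnat
      
    rw [← pow_add] at h1
    have h2 : m - It.card + r ≤ m := (Nat.pow_le_pow_iff_right (by norm_num)).1 h1
    omega
  have hcardIt : It.card = r := le_antisymm htr hrt
  refine ⟨hcardIt ▸ htm, It, hcardIt, hItfree, hmax, ?_⟩
  intro j hj
  obtain ⟨hbj1, hbj2⟩ := hbf j hj
  refine ⟨bf j % (n : ℤ), aux_emod_mem_A hn0 hbj1, ?_⟩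
  have hmod : (bf j % (n : ℤ)) • g j = bf j • g j := aux_zsmul_emod (hsm j) (bf j)
  set I0 : Finset (Fin m) := It.filter (fun i => ¬ (n : ℤ) ∣ af j i) with hI0
  have hex : I0 ⊆ It ∧ ∃ a : Fin m → ℤ, (∀ i ∈ I0, a i ∈ A) ∧
      (bf j % (n : ℤ)) • g j = ∑ i ∈ I0, a i • g i := by
    refine ⟨Finset.filter_subset _ _, fun i => af j i % (n : ℤ), fun i hi =>
      aux_emod_mem_A hn0 (Finset.mem_filter.1 hi).2, ?_⟩
    have e1 : ∑ i ∈ I0, (af j i % (n : ℤ)) • g i = ∑ i ∈ I0, af j i • g i :=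
      Finset.sum_congr rfl fun i _ => aux_zsmul_emod (hsm i) _
    have e2 : ∑ i ∈ I0, af j i • g i = ∑ i ∈ It, af j i • g i :=
      Finset.sum_filter_of_ne fun i _ hne hd => hne (aux_zsmul_zero_of_dvd (hsm i) hd)
    rw [hmod, hbj2, ← e2, ← e1]
  have huniq : ∀ I1 I2 : Finset (Fin m),
      (I1 ⊆ It ∧ ∃ a : Fin m → ℤ, (∀ i ∈ I1, a i ∈ A) ∧
        (bf j % (n : ℤ)) • g j = ∑ i ∈ I1, a i • g i) →
      (I2 ⊆ It ∧ ∃ a : Fin m → ℤ, (∀ i ∈ I2, a i ∈ A) ∧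
        (bf j % (n : ℤ)) • g j = ∑ i ∈ I2, a i • g i) → I1 = I2 := by
    rintro I1 I2 ⟨hs1, a1, ha1, he1⟩ ⟨hs2, a2, ha2, he2⟩
    set w1 : Fin m → ℤ := fun i =>
      (if i ∈ I1 then a1 i else 0) - (if i ∈ I2 then a2 i else 0) with hw1
    have u1 : ∀ (I' : Finset (Fin m)) (a' : Fin m → ℤ), I' ⊆ It →
        ∑ i ∈ It, (if i ∈ I' then a' i else 0) • g i = ∑ i ∈ I', a' i • g i := by
      intro I' a' hsub
      rw [Finset.sum_congr rfl fun i _ => by rw [ite_smul, zero_smul]]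
      rw [Finset.sum_ite_mem, Finset.inter_eq_right.2 hsub]
    have hrel : ∑ i ∈ It, w1 i • g i = 0 := by
      simp only [hw1, sub_smul]
      rw [Finset.sum_sub_distrib, u1 I1 a1 hs1, u1 I2 a2 hs2, ← he1, ← he2, sub_self]
    have hK := aux_wzsum_filter hn0 g hsm It w1 hrel
    have hKempty : It.filter (fun i => ¬ (n : ℤ) ∣ w1 i) = ∅ := by
      by_contra hne
      exact hItfree _ (Finset.filter_subset _ _) (Finset.nonempty_iff_ne_empty.2 hne) hK
    have hdvdall : ∀ i ∈ It, (n : ℤ) ∣ w1 i := by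
      intro i hi
      by_contra hnd
      exact (Finset.eq_empty_iff_forall_notMem.1 hKempty i)
        (Finset.mem_filter.2 ⟨hi, hnd⟩)
    ext i
    by_cases h1 : i ∈ I1 <;> by_cases h2 : i ∈ I2
    · simp [h1, h2]
    · exfalso
      have hd := hdvdall i (hs1 h1)
      simp only [hw1, if_pos h1, if_neg h2, sub_zero] at hd
      exact aux_mem_A_not_dvd hn0 (ha1 i h1) hd
    · exfalso
      have hd := hdvdall i (hs2 h2)
      simp only [hw1, if_neg h1, if_pos h2, zero_sub, dvd_neg] at hd
      exact aux_mem_A_not_dvd hn0 (ha2 i h2) hd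
    · simp [h1, h2]
  exact ⟨I0, hex, fun y hy => huniq y I0 hy hex⟩
end

section
/- Let G = H ⊕ C_n^r with exp(G) = n odd, exp(H) < n, and A = {1,...,n-1}. Suppose S is a sequence over G with 0 ∤ S, every element of S of order n, and N_{A,0}(S) = 2^{|S| - r} (the extremal value). Then r ≤ |S| ≤ 2r, and S = g_1 ⋯ g_r · h_1 ⋯ h_k with k ∈ [0, r], where T = g_1 ⋯ g_r is a maximal A-weighted zero-sum free subsequence, each h_j satisfies b_j h_j = ∑_{i∈I_j} a_i g_i for some b_j, a_i ∈ A and I_j ⊆ [1,r], and the sets I_1, ..., I_k are pairwise disjoint. -/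
open Finset

/-!
An index set carries an `A`-weighted zero sum exactly when it is the support modulo `n` of an
integer relation `∑ xᵢ gᵢ = 0`. Take a largest zero-sum free index set `T`. Each `j ∉ T` has a
relation `c j` whose support leaves `T` only at `j`, so the sums of the `c j` over subsets of `Tᶜ`
have `2 ^ (m - |T|)` distinct supports; a pigeonhole argument in `H ⊕ C_n^r` gives `|T| ≤ r`.
Extremality therefore forces `|T| = r`, and then the support of a relation is determined by its
part outside `T`. For odd `n` this makes `supp (c j) ⊆ supp x` whenever `j ∈ supp x \ T`, and a
relation supported on `T - i + j₁ + j₂` shows that no `i ∈ T` lies in both `supp (c j₁)` and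
`supp (c j₂)`. The sets `supp (c j) ∩ T` are nonempty because every `gⱼ` has order `n`, so
`m - r ≤ r`.
-/

namespace WeightedZeroSum

variable {ι : Type*} [Fintype ι]

def suppMod (n : ℕ) (x : ι → ℤ) : Finset ι := {i | ¬ (n : ℤ) ∣ x i}

@[simp]
lemma mem_suppMod {n : ℕ} {x : ι → ℤ} {i : ι} : i ∈ suppMod n x ↔ ¬ (n : ℤ) ∣ x i := by
  simp [suppMod]

@[simp]
lemma suppMod_zero {n : ℕ} : suppMod n (0 : ι → ℤ) = ∅ := by
  ext
  simp

@[simp]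
lemma suppMod_neg {n : ℕ} {x : ι → ℤ} : suppMod n (-x) = suppMod n x := by
  ext
  simp

lemma suppMod_zsmul_of_isCoprime {n : ℕ} {x : ι → ℤ} {k : ℤ} (hk : IsCoprime (n : ℤ) k) :
    suppMod n (k • x) = suppMod n x := by
  ext i
  simp only [mem_suppMod, Pi.smul_apply, smul_eq_mul]
  exact not_congr ⟨hk.dvd_of_dvd_mul_left, fun h => h.mul_left k⟩

open scoped Classical in
noncomputable def supports (K : AddSubgroup (ι → ℤ)) (n : ℕ) : Finset (Finset ι) :=
  {I | ∃ x ∈ K, suppMod n x = I}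

lemma mem_supports {K : AddSubgroup (ι → ℤ)} {n : ℕ} {I : Finset ι} :
    I ∈ supports K n ↔ ∃ x ∈ K, suppMod n x = I := by
  simp [supports]

def IsRelationFree (K : AddSubgroup (ι → ℤ)) (n : ℕ) (J : Finset ι) : Prop :=
  ∀ x ∈ K, suppMod n x ⊆ J → suppMod n x = ∅

section Relations

variable {G : Type*} [AddCommGroup G]

def relations (g : ι → G) : AddSubgroup (ι → ℤ) :=
  (Fintype.linearCombination ℤ g).toAddMonoidHom.ker

lemma mem_relations {g : ι → G} {x : ι → ℤ} : x ∈ relations g ↔ ∑ i, x i • g i = 0 := by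
  simp [relations, Fintype.linearCombination_apply]

variable {n : ℕ} {g : ι → G}

lemma sum_suppMod_zsmul (hg : ∀ i, (n : ℤ) • g i = 0) (x : ι → ℤ) :
    ∑ i ∈ suppMod n x, x i • g i = ∑ i, x i • g i :=
  sum_subset (subset_univ _) fun i _ hi => addOrderOf_dvd_iff_zsmul_eq_zero.1
    ((addOrderOf_dvd_iff_zsmul_eq_zero.2 (hg i)).trans (not_not.1 (mem_suppMod.not.1 hi)))

lemma suppMod_ne_singleton (hg : ∀ i, addOrderOf (g i) = n) {x : ι → ℤ} (hx : x ∈ relations g)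
    (j : ι) : suppMod n x ≠ {j} := by
  intro hxj
  have hg' : ∀ i, (n : ℤ) • g i = 0 := fun i => addOrderOf_dvd_iff_zsmul_eq_zero.1 (by rw [hg])
  refine mem_suppMod.1 (hxj ▸ mem_singleton_self j) ?_
  rw [← hg j, addOrderOf_dvd_iff_zsmul_eq_zero, ← sum_singleton (fun i => x i • g i) j, ← hxj,
    sum_suppMod_zsmul hg', ← mem_relations]
  exact hx

lemma exists_isZSFree_card_max (A : Set ℤ) (g : ι → G) :
    ∃ T, IsZSFree A g T ∧ ∀ J, IsZSFree A g J → #J ≤ #T := by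
  classical
  obtain ⟨T, hT, hTmax⟩ := exists_max_image {J | IsZSFree A g J} card
    ⟨∅, mem_filter.2 ⟨mem_univ _, fun I hI hI' => (hI'.ne_empty (subset_empty.1 hI)).elim⟩⟩
  exact ⟨T, (mem_filter.1 hT).2, fun J hJ => hTmax J (mem_filter.2 ⟨mem_univ _, hJ⟩)⟩

end Relations

variable [DecidableEq ι]

section suppMod

variable {n : ℕ} {x y : ι → ℤ}

lemma suppMod_add_subset : suppMod n (x + y) ⊆ suppMod n x ∪ suppMod n y := by
  intro i
  simp only [mem_suppMod, mem_union, Pi.add_apply]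
  contrapose!
  exact fun h => dvd_add h.1 h.2

lemma suppMod_sub_subset : suppMod n (x - y) ⊆ suppMod n x ∪ suppMod n y := by
  simpa [sub_eq_add_neg] using suppMod_add_subset (n := n) (x := x) (y := -y)

lemma suppMod_add_sdiff {T : Finset ι}
    (h : Disjoint (suppMod n x \ T) (suppMod n y \ T)) :
    suppMod n (x + y) \ T = suppMod n x \ T ∪ suppMod n y \ T := by
  ext i
  by_cases hiT : i ∈ T
  · simp [hiT]
  simp only [mem_sdiff, mem_union, mem_suppMod, Pi.add_apply, hiT, not_false_eq_true, and_true]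
  by_cases hx : (n : ℤ) ∣ x i
  · simp [hx, dvd_add_right hx]
  · have hy : (n : ℤ) ∣ y i := by
      by_contra hy
      exact disjoint_left.1 h (show i ∈ _ by simp [hiT, hx]) (by simp [hiT, hy])
    simp [hx, dvd_add_left hy]

end suppMod

section Extremal

variable {n : ℕ} {K : AddSubgroup (ι → ℤ)} {T : Finset ι} {c : ι → ι → ℤ}

lemma exists_suppMod_sdiff_eq_singleton (hT : IsRelationFree K n T) {j : ι}
    (hj : ¬ IsRelationFree K n (insert j T)) : ∃ x ∈ K, suppMod n x \ T = {j} := by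
  simp only [IsRelationFree, not_forall] at hj
  obtain ⟨x, hx, hsub, hne⟩ := hj
  refine ⟨x, hx, (subset_singleton_iff.1 fun i hi => ?_).resolve_left fun h => hne ?_⟩
  · obtain ⟨hix, hiT⟩ := mem_sdiff.1 hi
    exact mem_singleton.2 ((mem_insert.1 (hsub hix)).resolve_right hiT)
  · exact hT x hx (sdiff_eq_empty_iff_subset.1 h)

lemma suppMod_sum_sdiff (hc : ∀ j ∉ T, suppMod n (c j) \ T = {j}) {U : Finset ι}
    (hU : Disjoint U T) : suppMod n (∑ j ∈ U, c j) \ T = U := by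
  induction U using Finset.induction_on with
  | empty => simp
  | insert j U hj ih =>
    have hjT : j ∉ T := disjoint_left.1 hU (mem_insert_self j U)
    have hUT := ih (disjoint_of_subset_left (subset_insert j U) hU)
    rw [sum_insert hj, suppMod_add_sdiff, hc j hjT, hUT, insert_eq]
    rwa [hc j hjT, hUT, disjoint_singleton_left]

lemma injOn_suppMod_sum (hc : ∀ j ∉ T, suppMod n (c j) \ T = {j}) :
    Set.InjOn (fun U => suppMod n (∑ j ∈ U, c j)) (Tᶜ.powerset : Set (Finset ι)) := by
  intro U hU V hV hUV
  simp only [coe_powerset, Set.mem_preimage, Set.mem_powerset_iff, coe_subset,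
    subset_compl_iff_disjoint_right] at hU hV
  rw [← suppMod_sum_sdiff hc hU, ← suppMod_sum_sdiff hc hV]
  exact congrArg (· \ T) hUV

lemma mapsTo_suppMod_sum (hc : ∀ j ∉ T, c j ∈ K) :
    Set.MapsTo (fun U => suppMod n (∑ j ∈ U, c j)) (Tᶜ.powerset : Set (Finset ι))
      (supports K n) := by
  intro U hU
  simp only [coe_powerset, Set.mem_preimage, Set.mem_powerset_iff, coe_subset] at hU
  exact mem_supports.2 ⟨_, sum_mem fun j hj => hc j (mem_compl.1 (hU hj)), rfl⟩

lemma two_pow_card_compl_le_card_supports (hc : ∀ j ∉ T, c j ∈ K ∧ suppMod n (c j) \ T = {j}) :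
    2 ^ #Tᶜ ≤ #(supports K n) := by
  rw [← card_powerset]
  exact card_le_card_of_injOn _ (mapsTo_suppMod_sum fun j hj => (hc j hj).1)
    (injOn_suppMod_sum fun j hj => (hc j hj).2)

lemma suppMod_eq_of_sdiff_eq (hc : ∀ j ∉ T, c j ∈ K ∧ suppMod n (c j) \ T = {j})
    (hcard : #(supports K n) ≤ 2 ^ #Tᶜ) {x y : ι → ℤ} (hx : x ∈ K) (hy : y ∈ K)
    (hxy : suppMod n x \ T = suppMod n y \ T) : suppMod n x = suppMod n y := by
  have hsurj := surjOn_of_injOn_of_card_le _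
    (mapsTo_suppMod_sum fun j hj => (hc j hj).1) (injOn_suppMod_sum fun j hj => (hc j hj).2)
    (by rwa [card_powerset])
  have key : ∀ z ∈ K, suppMod n z = suppMod n (∑ j ∈ suppMod n z \ T, c j) := by
    intro z hz
    obtain ⟨U, hU, hUz⟩ := hsurj (mem_supports.2 ⟨z, hz, rfl⟩)
    simp only [coe_powerset, Set.mem_preimage, Set.mem_powerset_iff, coe_subset,
      subset_compl_iff_disjoint_right] at hU
    rw [← hUz, suppMod_sum_sdiff (fun j hj => (hc j hj).2) hU]
  rw [key x hx, key y hy, hxy]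

lemma card_eq_of_card_supports_mul_two_pow_eq {r : ℕ}
    (hc : ∀ j ∉ T, c j ∈ K ∧ suppMod n (c j) \ T = {j}) (hT : IsRelationFree K n T)
    (hD : ∀ J : Finset ι, r < #J → ¬ IsRelationFree K n J)
    (hcount : #(supports K n) * 2 ^ r = 2 ^ Fintype.card ι) :
    #T = r ∧ #(supports K n) = 2 ^ #Tᶜ := by
  have hTr : #T ≤ r := not_lt.1 fun h => hD T h hT
  have hTι : #T ≤ Fintype.card ι := card_le_univ T
  have hlow := two_pow_card_compl_le_card_supports hc
  rw [card_compl] at hlow ⊢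
  have : 2 ^ (Fintype.card ι - #T) * 2 ^ r ≤ 2 ^ Fintype.card ι :=
    hcount ▸ Nat.mul_le_mul_right _ hlow
  rw [← pow_add, Nat.pow_le_pow_iff_right one_lt_two] at this
  refine ⟨by omega, Nat.eq_of_mul_eq_mul_right (pow_pos two_pos r) ?_⟩
  rw [hcount, ← pow_add]
  congr 1
  omega

lemma suppMod_subset_of_mem_sdiff (hn : Odd n)
    (hc : ∀ j ∉ T, c j ∈ K ∧ suppMod n (c j) \ T = {j})
    (htrace : ∀ x ∈ K, ∀ y ∈ K, suppMod n x \ T = suppMod n y \ T → suppMod n x = suppMod n y)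
    {x : ι → ℤ} (hx : x ∈ K) {j : ι} (hj : j ∈ suppMod n x \ T) :
    suppMod n (c j) ⊆ suppMod n x := by
  have hjT : j ∉ T := (mem_sdiff.1 hj).2
  set U := suppMod n x \ T
  set s := ∑ k ∈ U.erase j, c k
  have hsK : s ∈ K :=
    sum_mem fun k hk => (hc k (mem_sdiff.1 (mem_of_mem_erase hk)).2).1
  have hs : suppMod n s \ T = U.erase j :=
    suppMod_sum_sdiff (fun k hk => (hc k hk).2)
      (disjoint_of_subset_left (erase_subset j U) sdiff_disjoint)
  have hshift : ∀ y ∈ K, suppMod n y \ T = {j} → suppMod n (s + y) = suppMod n x := by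
    intro y hy hyT
    refine htrace _ (add_mem hsK hy) x hx ?_
    rw [suppMod_add_sdiff (by simp [hs, hyT]), hs, hyT, union_comm, ← insert_eq,
      insert_erase hj]
  have h₂ : IsCoprime (n : ℤ) 2 := by
    exact_mod_cast Nat.isCoprime_iff_coprime.2 hn.coprime_two_right
  -- `c j` is half the difference of two relations whose supports are both that of `x`
  calc suppMod n (c j) = suppMod n ((2 : ℤ) • c j) := (suppMod_zsmul_of_isCoprime h₂).symm
    _ = suppMod n ((s + c j) - (s + -c j)) := by congr 1; abel
    _ ⊆ suppMod n (s + c j) ∪ suppMod n (s + -c j) := suppMod_sub_subset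
    _ = suppMod n x := by
      rw [hshift _ (hc j hjT).1 (hc j hjT).2,
        hshift _ (neg_mem (hc j hjT).1) (by rw [suppMod_neg, (hc j hjT).2]), union_self]

lemma disjoint_inter_suppMod (hn : Odd n)
    (hc : ∀ j ∉ T, c j ∈ K ∧ suppMod n (c j) \ T = {j})
    (htrace : ∀ x ∈ K, ∀ y ∈ K, suppMod n x \ T = suppMod n y \ T → suppMod n x = suppMod n y)
    (hT : IsRelationFree K n T) (hD : ∀ J : Finset ι, #T < #J → ¬ IsRelationFree K n J)
    {j₁ j₂ : ι} (hj₁ : j₁ ∉ T) (hj₂ : j₂ ∉ T) (hne : j₁ ≠ j₂) :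
    Disjoint (suppMod n (c j₁) ∩ T) (suppMod n (c j₂) ∩ T) := by
  refine disjoint_left.2 fun i hi₁ hi₂ => ?_
  obtain ⟨hi₁, hiT⟩ := mem_inter.1 hi₁
  have hi₂ := (mem_inter.1 hi₂).1
  -- a relation supported on `T - i + j₁ + j₂` must involve `j₁` or `j₂`, hence `i`
  set J := insert j₁ (insert j₂ (T.erase i))
  have hiJ : i ∉ J := by
    simp only [J, mem_insert, mem_erase, not_or]
    exact ⟨fun h => hj₁ (h ▸ hiT), fun h => hj₂ (h ▸ hiT), fun h => h.1 rfl⟩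
  have hJ : #T < #J := by
    rw [card_insert_of_notMem (by simp [hne, hj₁]), card_insert_of_notMem (by simp [hj₂]),
      card_erase_of_mem hiT]
    have := card_pos.2 ⟨i, hiT⟩
    omega
  simp only [IsRelationFree, not_forall] at hD
  obtain ⟨x, hx, hxJ, hxne⟩ := hD J hJ
  obtain ⟨j, hjx, hjT⟩ := not_subset.1 fun h => hxne (hT x hx h)
  have hsub := suppMod_subset_of_mem_sdiff hn hc htrace hx (mem_sdiff.2 ⟨hjx, hjT⟩)
  rcases mem_insert.1 (hxJ hjx) with rfl | hj
  · exact hiJ (hxJ (hsub hi₁))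
  · rcases mem_insert.1 hj with rfl | hj
    · exact hiJ (hxJ (hsub hi₂))
    · exact hjT (mem_of_mem_erase hj)

end Extremal

lemma emod_mem_Icc {n : ℕ} (hn : 0 < n) {a : ℤ} (ha : ¬ (n : ℤ) ∣ a) :
    a % n ∈ Set.Icc 1 ((n : ℤ) - 1) := by
  have h₀ := Int.emod_nonneg a (by omega : (n : ℤ) ≠ 0)
  have h₁ := Int.emod_lt_of_pos a (by omega : (0 : ℤ) < n)
  have h₂ : a % n ≠ 0 := fun h => ha (Int.dvd_of_emod_eq_zero h)
  constructor <;> omega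

lemma not_dvd_of_mem_Icc {n : ℕ} {a : ℤ} (ha : a ∈ Set.Icc 1 ((n : ℤ) - 1)) : ¬ (n : ℤ) ∣ a :=
  fun h => by
    have := Int.eq_zero_of_dvd_of_nonneg_of_lt (by linarith [ha.1]) (by linarith [ha.2]) h
    linarith [ha.1]

lemma emod_zsmul {G : Type*} [AddCommGroup G] {n : ℕ} {v : G} (hv : (n : ℤ) • v = 0) (a : ℤ) :
    (a % n) • v = a • v := by
  rw [← mod_addOrderOf_zsmul v, Int.emod_emod_of_dvd _ (addOrderOf_dvd_iff_zsmul_eq_zero.2 hv),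
    mod_addOrderOf_zsmul]

section WeightedSums

variable {G : Type*} [AddCommGroup G] {n : ℕ} {g : ι → G}

lemma isWZSum_iff (hn : 0 < n) (hg : ∀ i, (n : ℤ) • g i = 0) {I : Finset ι} :
    IsWZSum (Set.Icc 1 ((n : ℤ) - 1)) g I ↔ ∃ x ∈ relations g, suppMod n x = I := by
  constructor
  · rintro ⟨a, ha, hsum⟩
    refine ⟨fun i => if i ∈ I then a i else 0, ?_, ?_⟩
    · rw [mem_relations, ← hsum]
      simp [ite_smul, sum_ite_mem]
    · ext i
      by_cases hi : i ∈ I <;> simp [hi, not_dvd_of_mem_Icc (ha i _)]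
  · rintro ⟨x, hx, rfl⟩
    refine ⟨fun i => x i % n, fun i hi => emod_mem_Icc hn (mem_suppMod.1 hi), ?_⟩
    simp only [emod_zsmul (hg _)]
    rw [sum_suppMod_zsmul hg, ← mem_relations]
    exact hx

lemma isZSFree_iff (hn : 0 < n) (hg : ∀ i, (n : ℤ) • g i = 0) {J : Finset ι} :
    IsZSFree (Set.Icc 1 ((n : ℤ) - 1)) g J ↔ IsRelationFree (relations g) n J := by
  simp only [IsZSFree, IsRelationFree, isWZSum_iff hn hg]
  constructor
  · intro h x hx hxJ
    by_contra hne
    exact h _ hxJ (nonempty_iff_ne_empty.2 hne) ⟨x, hx, rfl⟩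
  · rintro h I hIJ hne ⟨x, hx, rfl⟩
    exact hne.ne_empty (h x hx hIJ)

lemma nzero_eq_card_supports (hn : 0 < n) (hg : ∀ i, (n : ℤ) • g i = 0) :
    NZero (Set.Icc 1 ((n : ℤ) - 1)) g = #(supports (relations g) n) := by
  rw [NZero, ← Set.ncard_coe_finset]
  congr 1
  ext I
  simp [mem_supports, isWZSum_iff hn hg]

lemma exists_zsmul_eq_sum_of_suppMod_eq_insert (hn : 0 < n) (hg : ∀ i, (n : ℤ) • g i = 0)
    {x : ι → ℤ} (hx : x ∈ relations g) {j : ι} {I : Finset ι} (hj : j ∉ I)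
    (hxI : suppMod n x = insert j I) :
    ∃ b ∈ Set.Icc 1 ((n : ℤ) - 1), ∃ a : ι → ℤ, (∀ i ∈ I, a i ∈ Set.Icc 1 ((n : ℤ) - 1)) ∧
      b • g j = ∑ i ∈ I, a i • g i := by
  have hsupp : ∀ i ∈ insert j I, ¬ (n : ℤ) ∣ x i := fun i hi => mem_suppMod.1 (hxI ▸ hi)
  have hsum : x j • g j + ∑ i ∈ I, x i • g i = 0 := by
    rwa [mem_relations, ← sum_suppMod_zsmul hg, hxI, sum_insert hj] at hx
  refine ⟨-x j % n, emod_mem_Icc hn (by simpa using hsupp j (mem_insert_self j I)),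
    fun i => x i % n, fun i hi => emod_mem_Icc hn (hsupp i (mem_insert_of_mem hi)), ?_⟩
  simp only [emod_zsmul (hg _), neg_smul]
  exact neg_eq_of_add_eq_zero_right hsum

end WeightedSums

lemma mul_two_pow_eq_of_cast_eq_two_zpow_sub {N m r : ℕ} (h : (N : ℚ) = 2 ^ ((m : ℤ) - r)) :
    N * 2 ^ r = 2 ^ m := by
  exact_mod_cast (show (N : ℚ) * 2 ^ r = 2 ^ m by
    rw [h, ← zpow_natCast, ← zpow_natCast, ← zpow_add₀ two_ne_zero, sub_add_cancel])

lemma card_compl_le_card_of_disjoint {T : Finset ι} {f : ι → Finset ι}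
    (hdisj : ∀ j₁ ∉ T, ∀ j₂ ∉ T, j₁ ≠ j₂ → Disjoint (f j₁ ∩ T) (f j₂ ∩ T))
    (hne : ∀ j ∉ T, (f j ∩ T).Nonempty) : #Tᶜ ≤ #T :=
  (card_le_card_biUnion (fun j₁ hj₁ j₂ hj₂ => hdisj j₁ (mem_compl.1 hj₁) j₂ (mem_compl.1 hj₂))
    fun j hj => hne j (mem_compl.1 hj)).trans
    (card_le_card (biUnion_subset.2 fun _ _ => inter_subset_right))

lemma card_nsmul_eq_zero_pi_le {κ C : Type*} [Fintype κ] [DecidableEq κ] [AddCommGroup C]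
    [Fintype C] [DecidableEq C] [IsAddCyclic C] {q : ℕ} (hq : 0 < q) :
    #{w : κ → C | q • w = 0} ≤ q ^ Fintype.card κ := by
  have : ({w : κ → C | q • w = 0} : Finset _) = Fintype.piFinset fun _ => {a : C | q • a = 0} := by
    ext w
    simp [funext_iff]
  rw [this, Fintype.card_piFinset, prod_const, card_univ]
  exact Nat.pow_le_pow_left (IsAddCyclic.card_nsmul_eq_zero_le hq) _

lemma exists_relation_of_card_torsion_lt {M : Type*} [AddCommGroup M] [Fintype M] [DecidableEq M]
    {v : ι → M} {q : ℕ} {J : Finset ι} (hv : ∀ i ∈ J, q • v i = 0)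
    (hcard : #{w : M | q • w = 0} < q ^ #J) :
    ∃ d : ι → ℤ, d ≠ 0 ∧ (∀ i ∉ J, d i = 0) ∧ (∀ i, |d i| < q) ∧ ∑ i, d i • v i = 0 := by
  have hq : 0 < q := Nat.pos_of_ne_zero fun hq => by
    subst hq
    have := zero_pow_le_one (M₀ := ℕ) #J
    simp only [zero_smul, filter_true, card_univ] at hcard
    have := Fintype.card_pos (α := M)
    omega
  set B : Finset (ι → ℕ) := Fintype.piFinset fun i => if i ∈ J then range q else {0}
  have hB : ∀ b ∈ B, ∀ i, b i < q ∧ (i ∉ J → b i = 0) := by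
    intro b hb i
    have := Fintype.mem_piFinset.1 hb i
    by_cases hi : i ∈ J <;> simp_all
  have hcardB : #B = q ^ #J := by
    simp [B, Fintype.card_piFinset, apply_ite card, prod_ite_mem]
  obtain ⟨b, hb, b', hb', hne, heq⟩ := exists_ne_map_eq_of_card_lt_of_maps_to (hcardB ▸ hcard)
    (f := fun b => ∑ i, b i • v i) (by
      intro b hb
      simp only [coe_filter, mem_univ, true_and, Set.mem_ofPred_eq, smul_sum]
      refine sum_eq_zero fun i _ => ?_
      by_cases hi : i ∈ J
      · rw [smul_comm, hv i hi, smul_zero]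
      · rw [(hB b hb i).2 hi, zero_smul, smul_zero])
  refine ⟨fun i => b i - b' i, fun h => hne (funext fun i => ?_), fun i hi => ?_, fun i => ?_, ?_⟩
  · have := congr_fun h i
    simp only [Pi.zero_apply] at this
    omega
  · simp [(hB b hb i).2 hi, (hB b' hb' i).2 hi]
  · have := hB b hb i
    have := hB b' hb' i
    rw [abs_sub_lt_iff]
    omega
  · simp only [sub_smul, sum_sub_distrib, natCast_zsmul]
    exact sub_eq_zero.2 heq

lemma not_isRelationFree_of_lt_card {H : Type*} [AddCommGroup H] [Finite H] {n r : ℕ}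
    (hdvd : AddMonoid.exponent H ∣ n) (hlt : AddMonoid.exponent H < n)
    (g : ι → H × (Fin r → ZMod n)) {J : Finset ι} (hJ : r < #J) :
    ¬ IsRelationFree (relations g) n J := by
  obtain ⟨q, hnq⟩ := hdvd
  -- multiplying by `exp H` kills the `H`-components and lands in the `q`-torsion of
  -- `(ZMod n)^r`, which has at most `q ^ r < q ^ #J` elements
  have he : 0 < AddMonoid.exponent H := AddMonoid.exponent_pos.2 .of_finite
  have hq : 1 < q := (lt_mul_iff_one_lt_right he).1 (hnq ▸ hlt)
  have : NeZero n := ⟨by rw [hnq]; positivity⟩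
  have hv : ∀ i ∈ J, q • AddMonoid.exponent H • (g i).2 = 0 := fun i _ => by
    rw [smul_smul, mul_comm, ← hnq]
    funext k
    simp [nsmul_eq_mul]
  obtain ⟨d, hd0, hdJ, hdq, hd⟩ := exists_relation_of_card_torsion_lt hv
    ((card_nsmul_eq_zero_pi_le (by omega)).trans_lt (by simpa using Nat.pow_lt_pow_right hq hJ))
  have hsupp : ∀ i, i ∈ suppMod n (AddMonoid.exponent H • d) ↔ d i ≠ 0 := by
    intro i
    rw [mem_suppMod, Pi.smul_apply, nsmul_eq_mul, hnq, Nat.cast_mul,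
      mul_dvd_mul_iff_left (by positivity)]
    exact not_congr ⟨fun h => Int.eq_zero_of_abs_lt_dvd h (hdq i), fun h => h ▸ dvd_zero _⟩
  have hmem : AddMonoid.exponent H • d ∈ relations g := by
    rw [mem_relations]
    refine Prod.ext ?_ ?_
    · simp [Prod.fst_sum, mul_comm, mul_smul, AddMonoid.exponent_nsmul_eq_zero]
    · simpa [Prod.snd_sum, mul_comm, mul_smul] using hd
  intro hfree
  obtain ⟨i, hi⟩ := Function.ne_iff.1 hd0
  have hempty := hfree _ hmem fun k hk => by_contra fun hkJ => (hsupp k).1 hk (hdJ k hkJ)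
  exact (hempty ▸ (hsupp i).2 hi : i ∈ (∅ : Finset ι)) |> notMem_empty i

end WeightedZeroSum

open WeightedZeroSum in
theorem stmt9_general (H : Type*) [AddCommGroup H] [Finite H] (n r : ℕ) (hodd : Odd n)
    (hexpH : AddMonoid.exponent H < n)
    (hexp : AddMonoid.exponent (H × (Fin r → ZMod n)) = n)
    (m : ℕ) (g : Fin m → H × (Fin r → ZMod n))
    (hord : ∀ i, addOrderOf (g i) = n)
    (hN : (NZero (Set.Icc 1 ((n : ℤ) - 1)) g : ℚ) = 2 ^ ((m : ℤ) - (r : ℤ))) :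
    r ≤ m ∧ m ≤ 2 * r ∧ ∃ It : Finset (Fin m), It.card = r ∧
      IsZSFree (Set.Icc 1 ((n : ℤ) - 1)) g It ∧
      (∀ J : Finset (Fin m),
        IsZSFree (Set.Icc 1 ((n : ℤ) - 1)) g J → J.card ≤ It.card) ∧
      ∃ Ifam : Fin m → Finset (Fin m),
        (∀ j ∉ It, Ifam j ⊆ It ∧ ∃ b ∈ Set.Icc 1 ((n : ℤ) - 1),
          ∃ a : Fin m → ℤ, (∀ i ∈ Ifam j, a i ∈ Set.Icc 1 ((n : ℤ) - 1)) ∧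
            b • g j = ∑ i ∈ Ifam j, a i • g i) ∧
        (∀ j₁ ∉ It, ∀ j₂ ∉ It, j₁ ≠ j₂ → Disjoint (Ifam j₁) (Ifam j₂)) := by
  have hn : 0 < n := Nat.zero_lt_of_lt hexpH
  have hg : ∀ i, (n : ℤ) • g i = 0 := fun i => addOrderOf_dvd_iff_zsmul_eq_zero.1 (by rw [hord])
  have hD : ∀ J : Finset (Fin m), r < #J → ¬ IsRelationFree (relations g) n J :=
    fun J => not_isRelationFree_of_lt_card
      (by rw [← hexp, AddMonoid.exponent_prod]; exact dvd_lcm_left _ _) hexpH g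
  obtain ⟨T, hTfree, hTmax⟩ := exists_isZSFree_card_max (Set.Icc 1 ((n : ℤ) - 1)) g
  have hT := (isZSFree_iff hn hg).1 hTfree
  choose! c hc using fun j (hj : j ∉ T) => exists_suppMod_sdiff_eq_singleton hT (j := j)
    fun h => by simpa [card_insert_of_notMem hj] using hTmax _ ((isZSFree_iff hn hg).2 h)
  have hcount : #(supports (relations g) n) * 2 ^ r = 2 ^ Fintype.card (Fin m) := by
    rw [Fintype.card_fin, ← nzero_eq_card_supports hn hg]
    exact mul_two_pow_eq_of_cast_eq_two_zpow_sub hN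
  obtain ⟨hTr, hcard⟩ := card_eq_of_card_supports_mul_two_pow_eq hc hT hD hcount
  have htrace := fun x hx y hy => suppMod_eq_of_sdiff_eq hc hcard.le (x := x) (y := y) hx hy
  have hdisj := fun j₁ hj₁ j₂ hj₂ hne =>
    disjoint_inter_suppMod hodd hc htrace hT (hTr ▸ hD) (j₁ := j₁) (j₂ := j₂) hj₁ hj₂ hne
  have hcj : ∀ j ∉ T, suppMod n (c j) = insert j (suppMod n (c j) ∩ T) := fun j hj => by
    rw [insert_eq, ← (hc j hj).2, sdiff_union_inter]
  have hcompl : #Tᶜ ≤ #T := card_compl_le_card_of_disjoint hdisj fun j hj =>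
    nonempty_iff_ne_empty.2 fun h => suppMod_ne_singleton hord (hc j hj).1 j
      (by rw [hcj j hj, h, insert_empty])
  have hTm : #T ≤ m := (card_le_univ T).trans_eq (Fintype.card_fin m)
  rw [card_compl, Fintype.card_fin] at hcompl
  refine ⟨by omega, by omega, T, hTr, hTfree, hTmax, fun j => suppMod n (c j) ∩ T,
    fun j hj => ⟨inter_subset_right, exists_zsmul_eq_sum_of_suppMod_eq_insert hn hg (hc j hj).1
      (by simp [hj]) (hcj j hj)⟩, hdisj⟩

theorem stmt9 (H : Type*) [AddCommGroup H] [Finite H] (n r : ℕ) (hodd : Odd n)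
    (hexpH : AddMonoid.exponent H < n)
    (hexp : AddMonoid.exponent (H × (Fin r → ZMod n)) = n)
    (m : ℕ) (g : Fin m → H × (Fin r → ZMod n))
    (h0 : ∀ i, g i ≠ 0) (hord : ∀ i, addOrderOf (g i) = n)
    (hN : (NZero (Set.Icc 1 ((n : ℤ) - 1)) g : ℚ) = 2 ^ ((m : ℤ) - (r : ℤ))) :
    r ≤ m ∧ m ≤ 2 * r ∧ ∃ It : Finset (Fin m), It.card = r ∧
      IsZSFree (Set.Icc 1 ((n : ℤ) - 1)) g It ∧
      (∀ J : Finset (Fin m),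
        IsZSFree (Set.Icc 1 ((n : ℤ) - 1)) g J → J.card ≤ It.card) ∧
      ∃ Ifam : Fin m → Finset (Fin m),
        (∀ j ∉ It, Ifam j ⊆ It ∧ ∃ b ∈ Set.Icc 1 ((n : ℤ) - 1),
          ∃ a : Fin m → ℤ, (∀ i ∈ Ifam j, a i ∈ Set.Icc 1 ((n : ℤ) - 1)) ∧
            b • g j = ∑ i ∈ Ifam j, a i • g i) ∧
        (∀ j₁ ∉ It, ∀ j₂ ∉ It, j₁ ≠ j₂ → Disjoint (Ifam j₁) (Ifam j₂)) :=
  stmt9_general H n r hodd hexpH hexp m g hord hN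
end

section
/- Let G be a finite abelian group of odd exponent n, A = {1,...,n-1}, and let T = g_1 ⋯ g_r be an A-weighted zero-sum free sequence over G. Suppose h_1, h_2 are elements of G with b_1 h_1 = ∑_{i∈I_1} a_i g_i and b_2 h_2 = ∑_{i∈I_2} c_i g_i for weights b_1, b_2, a_i, c_i ∈ A and subsets I_1, I_2 ⊆ [1,r] with I_1 ∩ I_2 ≠ ∅. Then at least one of the two elements b_1 h_1 + b_2 h_2 and b_1 h_1 − b_2 h_2 is expressible as a nonempty A-weighted sum ∑_{i∈I} d_i g_i with ∅ ≠ I ⊆ I_1 ∪ I_2 and d_i ∈ A. -/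
open Finset

/-
Fix an index `i₀ ∈ I₁ ∩ I₂`. Adding (resp. subtracting) the two weighted sums gives a sum over
`I₁ ∪ I₂` whose weights, reduced modulo `n`, lie in `[0, n - 1]`; dropping the indices of weight `0`
leaves an `A`-weighted sum. It is nonempty as soon as `i₀` keeps a nonzero weight, i.e. as soon as
`n ∤ aᵢ₀ + cᵢ₀` (resp. `n ∤ aᵢ₀ - cᵢ₀`). Both cannot fail: `n` would divide `2 aᵢ₀`, hence `aᵢ₀`
since `n` is odd, contradicting `1 ≤ aᵢ₀ ≤ n - 1`.
-/

lemma zsmul_emod_of_nsmul_eq_zero {G : Type*} [AddGroup G] {N : ℕ} {x : G} (hx : N • x = 0)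
    (m : ℤ) : (m % (N : ℤ)) • x = m • x := by
  conv_rhs => rw [← Int.emod_add_mul_ediv m N]
  rw [add_zsmul, mul_comm, mul_zsmul, natCast_zsmul, hx, zsmul_zero, add_zero]

lemma not_dvd_add_or_not_dvd_sub_of_odd {N x y : ℤ} (hN : Odd N) (hx : ¬ N ∣ x) :
    ¬ N ∣ x + y ∨ ¬ N ∣ x - y := by
  by_contra! h
  have h2x : N ∣ 2 * x := by simpa [two_mul] using dvd_add h.1 h.2
  exact hx ((Int.isCoprime_two_left.mpr hN).symm.dvd_of_dvd_mul_left h2x)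

lemma sum_smul_add_sum_smul_eq_sum_union {G ι : Type*} [AddCommGroup G] [DecidableEq ι]
    (g : ι → G) (I₁ I₂ : Finset ι) (a c : ι → ℤ) :
    ∑ i ∈ I₁, a i • g i + ∑ i ∈ I₂, c i • g i =
      ∑ i ∈ I₁ ∪ I₂, ((I₁ : Set ι).indicator a i + (I₂ : Set ι).indicator c i) • g i := by
  rw [← sum_indicator_subset (fun i ↦ a i • g i) (subset_union_left (s₂ := I₂)),
    ← sum_indicator_subset (fun i ↦ c i • g i) (subset_union_right (s₁ := I₁)), ← sum_add_distrib]
  refine sum_congr rfl fun i _ ↦ ?_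
  rw [add_smul, Set.indicator_smul_apply_left, Set.indicator_smul_apply_left]

lemma exists_sum_Icc_of_not_dvd {G ι : Type*} [AddCommGroup G] {N : ℕ} (hN : N ≠ 0) (g : ι → G)
    (hg : ∀ i, N • g i = 0) (J : Finset ι) (f : ι → ℤ) {i₀ : ι} (hi₀ : i₀ ∈ J)
    (hf : ¬ (N : ℤ) ∣ f i₀) :
    ∃ I ⊆ J, I.Nonempty ∧ ∃ d : ι → ℤ, (∀ i ∈ I, d i ∈ Set.Icc 1 ((N : ℤ) - 1)) ∧
      ∑ i ∈ J, f i • g i = ∑ i ∈ I, d i • g i := by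
  set d : ι → ℤ := fun i ↦ f i % N
  refine ⟨J.filter (d · ≠ 0), filter_subset _ _, ⟨i₀, mem_filter.mpr ⟨hi₀, ?_⟩⟩, d, ?_, ?_⟩
  · exact mt Int.dvd_iff_emod_eq_zero.mpr hf
  · intro i hi
    have h₀ : 0 ≤ d i := Int.emod_nonneg _ (by exact_mod_cast hN)
    have hN' : d i < N := Int.emod_lt_of_pos _ (by omega)
    have := (mem_filter.mp hi).2
    constructor <;> omega
  · rw [sum_filter_of_ne fun i _ h ↦ by rintro h'; simp [h'] at h]
    exact sum_congr rfl fun i _ ↦ (zsmul_emod_of_nsmul_eq_zero (hg i) (f i)).symm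

lemma exists_sum_Icc_eq_sum_add_sum {G ι : Type*} [AddCommGroup G] [DecidableEq ι] {N : ℕ}
    (hN : N ≠ 0) (g : ι → G) (hg : ∀ i, N • g i = 0) {I₁ I₂ : Finset ι} {a c : ι → ℤ} {i₀ : ι}
    (hi₀₁ : i₀ ∈ I₁) (hi₀₂ : i₀ ∈ I₂) (hac : ¬ (N : ℤ) ∣ a i₀ + c i₀) :
    ∃ I ⊆ I₁ ∪ I₂, I.Nonempty ∧ ∃ d : ι → ℤ, (∀ i ∈ I, d i ∈ Set.Icc 1 ((N : ℤ) - 1)) ∧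
      ∑ i ∈ I₁, a i • g i + ∑ i ∈ I₂, c i • g i = ∑ i ∈ I, d i • g i := by
  rw [sum_smul_add_sum_smul_eq_sum_union]
  refine exists_sum_Icc_of_not_dvd hN g hg _ _ (mem_union_left _ hi₀₁) ?_
  rwa [Set.indicator_of_mem (mem_coe.mpr hi₀₁), Set.indicator_of_mem (mem_coe.mpr hi₀₂)]

theorem stmt10_general (G : Type*) [AddCommGroup G] (n : ℕ)
    (hn : AddMonoid.exponent G = n) (hodd : Odd n)
    (r : ℕ) (g : Fin r → G)
    (h₁ h₂ : G) (b₁ b₂ : ℤ)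
    (I₁ I₂ : Finset (Fin r)) (a c : Fin r → ℤ)
    (ha : ∀ i ∈ I₁, a i ∈ Set.Icc 1 ((n : ℤ) - 1))
    (e₁ : b₁ • h₁ = ∑ i ∈ I₁, a i • g i)
    (e₂ : b₂ • h₂ = ∑ i ∈ I₂, c i • g i)
    (hI : (I₁ ∩ I₂).Nonempty) :
    ∃ I ⊆ I₁ ∪ I₂, I.Nonempty ∧ ∃ d : Fin r → ℤ,
      (∀ i ∈ I, d i ∈ Set.Icc 1 ((n : ℤ) - 1)) ∧
      (b₁ • h₁ + b₂ • h₂ = ∑ i ∈ I, d i • g i ∨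
       b₁ • h₁ - b₂ • h₂ = ∑ i ∈ I, d i • g i) := by
  obtain ⟨i₀, hi₀⟩ := hI
  obtain ⟨hi₀₁, hi₀₂⟩ := mem_inter.mp hi₀
  have hg : ∀ i, n • g i = 0 := fun i ↦ hn ▸ AddMonoid.exponent_nsmul_eq_zero (g i)
  have ha₀ : ¬ (n : ℤ) ∣ a i₀ := fun h ↦ by
    obtain ⟨h1, h2⟩ := ha i₀ hi₀₁
    have := Int.eq_zero_of_dvd_of_nonneg_of_lt (by omega) (by omega) h
    omega
  rcases not_dvd_add_or_not_dvd_sub_of_odd (Int.odd_coe_nat n |>.mpr hodd) ha₀ (y := c i₀)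
    with hadd | hsub
  · obtain ⟨I, hIJ, hIne, d, hd, hsum⟩ :=
      exists_sum_Icc_eq_sum_add_sum hodd.pos.ne' g hg hi₀₁ hi₀₂ hadd
    exact ⟨I, hIJ, hIne, d, hd, Or.inl (by rw [e₁, e₂, hsum])⟩
  · obtain ⟨I, hIJ, hIne, d, hd, hsum⟩ := exists_sum_Icc_eq_sum_add_sum hodd.pos.ne' g hg
      hi₀₁ hi₀₂ (c := -c) (by rwa [Pi.neg_apply, ← sub_eq_add_neg])
    refine ⟨I, hIJ, hIne, d, hd, Or.inr ?_⟩
    simp only [e₁, e₂, ← hsum, Pi.neg_apply, neg_smul, sum_neg_distrib, sub_eq_add_neg]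

theorem stmt10 (G : Type*) [AddCommGroup G] [Finite G] (n : ℕ)
    (hn : AddMonoid.exponent G = n) (hodd : Odd n)
    (r : ℕ) (g : Fin r → G)
    (hzsf : IsZSFree (Set.Icc 1 ((n : ℤ) - 1)) g Finset.univ)
    (h₁ h₂ : G) (b₁ b₂ : ℤ)
    (hb₁ : b₁ ∈ Set.Icc 1 ((n : ℤ) - 1)) (hb₂ : b₂ ∈ Set.Icc 1 ((n : ℤ) - 1))
    (I₁ I₂ : Finset (Fin r)) (a c : Fin r → ℤ)
    (ha : ∀ i ∈ I₁, a i ∈ Set.Icc 1 ((n : ℤ) - 1))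
    (hc : ∀ i ∈ I₂, c i ∈ Set.Icc 1 ((n : ℤ) - 1))
    (e₁ : b₁ • h₁ = ∑ i ∈ I₁, a i • g i)
    (e₂ : b₂ • h₂ = ∑ i ∈ I₂, c i • g i)
    (hI : (I₁ ∩ I₂).Nonempty) :
    ∃ I ⊆ I₁ ∪ I₂, I.Nonempty ∧ ∃ d : Fin r → ℤ,
      (∀ i ∈ I, d i ∈ Set.Icc 1 ((n : ℤ) - 1)) ∧
      (b₁ • h₁ + b₂ • h₂ = ∑ i ∈ I, d i • g i ∨
       b₁ • h₁ - b₂ • h₂ = ∑ i ∈ I, d i • g i) :=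
  stmt10_general G n hn hodd r g h₁ h₂ b₁ b₂ I₁ I₂ a c ha e₁ e₂ hI
end

section
/- Let G be a finite abelian group of exponent n with A = {1,...,n-1}, and let S = g_1 ⋯ g_m be a sequence over G containing a maximal A-weighted zero-sum free subsequence T of length strictly less than D_A(G) − 1 (where maximality is among A-weighted zero-sum free subsequences of S), and assume G = H ⊕ C_n^r with exp(H) < n so D_A(G) = r+1. Then N_{A,0}(S) > 2^{|S| − D_A(G) + 1}, i.e., S is strictly above the extremal bound. -/
/-!
Let `T` be a maximal `A`-weighted zero-sum free part of `S`. By maximality, each `gᵢ` outside `T`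
occurs with a weight from `A` in a weighted relation whose other terms lie in `T`. For
`J ⊆ S T⁻¹`, add up the relations of the `i ∈ J` and reduce every coefficient mod `n`, which
`n G = 0` allows: the indices with nonzero residue carry an `A`-weighted zero sum whose part
outside `T` is exactly `J`. Hence `N_{A,0}(S) ≥ 2^{|S| - |T|}`, and `|T| + 1 < D_A(G)` makes this
exceed `2^{|S| - D_A(G) + 1}`.
-/

open Finset

section

variable {G ι : Type*} [AddCommGroup G] [Fintype ι]

theorem emod_zsmul_of_nsmul_eq_zero {n : ℕ} {x : G} (hx : n • x = 0) (k : ℤ) :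
    (k % n) • x = k • x := by
  rw [Int.emod_def, sub_zsmul, mul_comm, mul_zsmul, natCast_zsmul, hx, zsmul_zero, neg_zero,
    add_zero]

theorem isWZSum_filter_not_dvd {n : ℕ} (hn : 0 < n) (hG : ∀ x : G, n • x = 0) {g : ι → G}
    {c : ι → ℤ} (hc : ∑ j, c j • g j = 0) :
    IsWZSum (Set.Icc 1 ((n : ℤ) - 1)) g (univ.filter fun j => ¬ (n : ℤ) ∣ c j) := by
  refine ⟨fun j => c j % n, fun j hj => ?_, ?_⟩
  · have hndvd : c j % n ≠ 0 := fun h => (mem_filter.1 hj).2 (Int.dvd_of_emod_eq_zero h)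
    have := Int.emod_nonneg (c j) (by omega : (n : ℤ) ≠ 0)
    have := Int.emod_lt_of_pos (c j) (by omega : (0 : ℤ) < n)
    exact show 1 ≤ c j % n ∧ c j % n ≤ n - 1 by omega
  · have hdvd : ∀ j ∈ univ, c j • g j ≠ 0 → ¬ (n : ℤ) ∣ c j := fun j _ hj hdvd => by
      rw [← emod_zsmul_of_nsmul_eq_zero (hG _), Int.emod_eq_zero_of_dvd hdvd, zero_zsmul] at hj
      exact hj rfl
    calc ∑ j ∈ univ.filter fun j => ¬ (n : ℤ) ∣ c j, (c j % n) • g j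
        = ∑ j ∈ univ.filter fun j => ¬ (n : ℤ) ∣ c j, c j • g j :=
          sum_congr rfl fun j _ => emod_zsmul_of_nsmul_eq_zero (hG _) _
      _ = 0 := by rw [sum_filter_of_ne hdvd, hc]

theorem exists_zsmul_sum_eq_zero_of_maximal {A : Set ℤ} {g : ι → G} {T : Finset ι}
    (hT : IsZSFree A g T) (hmax : ∀ J, IsZSFree A g J → #J ≤ #T) {i : ι} (hi : i ∉ T) :
    ∃ a : ι → ℤ, a i ∈ A ∧ (∀ j ∉ T, j ≠ i → a j = 0) ∧ ∑ j, a j • g j = 0 := by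
  classical
  have hnot : ¬ IsZSFree A g (insert i T) := fun h => by
    have := hmax _ h
    rw [card_insert_of_notMem hi] at this
    omega
  simp only [IsZSFree, not_forall, not_not, exists_prop] at hnot
  obtain ⟨I, hIsub, hIne, b, hbA, hbsum⟩ := hnot
  have hiI : i ∈ I := by
    by_contra hiI
    refine hT I (fun j hj => ?_) hIne ⟨b, hbA, hbsum⟩
    exact (mem_insert.1 (hIsub hj)).resolve_left (by rintro rfl; exact hiI hj)
  refine ⟨fun j => if j ∈ I then b j else 0, by simpa [hiI] using hbA i hiI,
    fun j hjT hji => if_neg fun hj => ?_, ?_⟩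
  · exact (mem_insert.1 (hIsub hj)).elim hji hjT
  · simpa [ite_smul, sum_ite_mem] using hbsum

theorem filter_not_dvd_sum_sdiff_eq [DecidableEq ι] {n : ℕ} {T J : Finset ι} (hJ : J ⊆ Tᶜ)
    {a : ι → ι → ℤ} (haA : ∀ i ∉ T, a i i ∈ Set.Icc 1 ((n : ℤ) - 1))
    (ha0 : ∀ i ∉ T, ∀ j ∉ T, j ≠ i → a i j = 0) :
    (univ.filter fun j => ¬ (n : ℤ) ∣ ∑ i ∈ J, a i j) \ T = J := by
  have hJT : ∀ i ∈ J, i ∉ T := fun i hi => mem_compl.1 (hJ hi)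
  ext j
  simp only [mem_sdiff, mem_filter, mem_univ, true_and]
  by_cases hjT : j ∈ T
  · exact iff_of_false (fun h => h.2 hjT) fun hjJ => hJT j hjJ hjT
  by_cases hjJ : j ∈ J
  · rw [sum_eq_single_of_mem j hjJ fun i hi hij => ha0 i (hJT i hi) j hjT hij.symm]
    obtain ⟨h₁, h₂⟩ := haA j hjT
    refine iff_of_true ⟨fun hdvd => ?_, hjT⟩ hjJ
    have := Int.eq_zero_of_dvd_of_nonneg_of_lt (by omega) (by omega) hdvd
    omega
  · rw [sum_eq_zero fun i hi => ha0 i (hJT i hi) j hjT fun hji => hjJ (hji ▸ hi)]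
    simp [hjJ]

theorem two_pow_card_compl_le_nZero [DecidableEq ι] {n : ℕ} (hn : 0 < n)
    (hG : ∀ x : G, n • x = 0) {g : ι → G} {T : Finset ι}
    (hT : IsZSFree (Set.Icc 1 ((n : ℤ) - 1)) g T)
    (hmax : ∀ J, IsZSFree (Set.Icc 1 ((n : ℤ) - 1)) g J → #J ≤ #T) :
    2 ^ #Tᶜ ≤ NZero (Set.Icc 1 ((n : ℤ) - 1)) g := by
  choose! a haA ha0 hasum using
    fun i (hi : i ∉ T) => exists_zsmul_sum_eq_zero_of_maximal hT hmax hi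
  set F : Finset ι → Finset ι := fun J => univ.filter fun j => ¬ (n : ℤ) ∣ ∑ i ∈ J, a i j
  have hF_sdiff : ∀ J ∈ Tᶜ.powerset, F J \ T = J := fun J hJ =>
    filter_not_dvd_sum_sdiff_eq (mem_powerset.1 hJ) haA ha0
  have hF_wzsum : ∀ J ∈ Tᶜ.powerset, IsWZSum (Set.Icc 1 ((n : ℤ) - 1)) g (F J) := by
    intro J hJ
    refine isWZSum_filter_not_dvd hn hG ?_
    simp only [sum_smul]
    rw [sum_comm]
    exact sum_eq_zero fun i hi => hasum i (mem_compl.1 (mem_powerset.1 hJ hi))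
  have hinj : Set.InjOn F Tᶜ.powerset := fun J₁ h₁ J₂ h₂ h => by
    rw [← hF_sdiff J₁ h₁, ← hF_sdiff J₂ h₂, h]
  calc 2 ^ #Tᶜ = #(Tᶜ.powerset.image F) := by rw [card_image_of_injOn hinj, card_powerset]
    _ = (↑(Tᶜ.powerset.image F) : Set (Finset ι)).ncard := (Set.ncard_coe_finset _).symm
    _ ≤ NZero (Set.Icc 1 ((n : ℤ) - 1)) g := by
      refine Set.ncard_le_ncard ?_ (Set.toFinite _)
      rw [coe_image, Set.image_subset_iff]
      exact hF_wzsum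

end

theorem stmt15_general (H : Type*) [AddCommGroup H] (n r : ℕ)
    (hexpH : AddMonoid.exponent H < n)
    (hexp : AddMonoid.exponent (H × (Fin r → ZMod n)) = n)
    (m : ℕ) (g : Fin m → H × (Fin r → ZMod n)) (It : Finset (Fin m))
    (hzsf : IsZSFree (Set.Icc 1 ((n : ℤ) - 1)) g It)
    (hmax : ∀ J : Finset (Fin m),
      IsZSFree (Set.Icc 1 ((n : ℤ) - 1)) g J → J.card ≤ It.card)
    (hcard : It.card + 1 <
      DavenportW (Set.Icc 1 ((n : ℤ) - 1)) (H × (Fin r → ZMod n))) :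
    (2 : ℚ) ^ ((m : ℤ) + 1 -
        (DavenportW (Set.Icc 1 ((n : ℤ) - 1)) (H × (Fin r → ZMod n)) : ℤ))
      < (NZero (Set.Icc 1 ((n : ℤ) - 1)) g : ℚ) := by
  have hcount := two_pow_card_compl_le_nZero (by omega)
    (fun x => by simpa only [hexp] using AddMonoid.exponent_nsmul_eq_zero x) hzsf hmax
  rw [card_compl, Fintype.card_fin] at hcount
  have hItm : #It ≤ m := by simpa using card_le_univ It
  calc _ < (2 : ℚ) ^ ((m - #It : ℕ) : ℤ) := zpow_lt_zpow_right₀ one_lt_two (by omega)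
    _ = ((2 ^ (m - #It) : ℕ) : ℚ) := by push_cast; exact zpow_natCast _ _
    _ ≤ _ := by exact_mod_cast hcount

theorem stmt15 (H : Type*) [AddCommGroup H] [Finite H] (n r : ℕ)
    (hexpH : AddMonoid.exponent H < n)
    (hexp : AddMonoid.exponent (H × (Fin r → ZMod n)) = n)
    (hDav : DavenportW (Set.Icc 1 ((n : ℤ) - 1)) (H × (Fin r → ZMod n)) = r + 1)
    (m : ℕ) (g : Fin m → H × (Fin r → ZMod n)) (It : Finset (Fin m))
    (hzsf : IsZSFree (Set.Icc 1 ((n : ℤ) - 1)) g It)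
    (hmax : ∀ J : Finset (Fin m),
      IsZSFree (Set.Icc 1 ((n : ℤ) - 1)) g J → J.card ≤ It.card)
    (hcard : It.card + 1 <
      DavenportW (Set.Icc 1 ((n : ℤ) - 1)) (H × (Fin r → ZMod n))) :
    (2 : ℚ) ^ ((m : ℤ) + 1 -
        (DavenportW (Set.Icc 1 ((n : ℤ) - 1)) (H × (Fin r → ZMod n)) : ℤ))
      < (NZero (Set.Icc 1 ((n : ℤ) - 1)) g : ℚ) :=
  stmt15_general H n r hexpH hexp m g It hzsf hmax hcard
end
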